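/- arXiv:2507.15589 — 7 statements merged into one kernel-verified Lean document; each statement's English description precedes it below -/
import Mathlib

section
/- Let X and Y be Polish spaces, ν a probability measure on X, and f ∈ L¹(ν) a nonnegative density; set dν̃ = f dν. Let μ_n[dy | x] be probability kernels from X to Y and μ another probability kernel. If ν ⊗ μ_n converges weakly to ν ⊗ μ on X × Y, then ν̃ ⊗ μ_n converges weakly to ν̃ ⊗ μ. -/
open MeasureTheory ProbabilityTheory Filter Topology
open scoped ENNReal NNReal

/-- Let `X, Y` be Polish spaces, `ν` a probability measure on `X`, and `f ∈ L¹(ν)` a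
nonnegative density; set `ν̃ = f dν`.  If `ν ⊗ μ_n → ν ⊗ μ` weakly on `X × Y`, then also
`ν̃ ⊗ μ_n → ν̃ ⊗ μ` weakly. -/
theorem stmt4 {X Y : Type*}
    [TopologicalSpace X] [PolishSpace X] [MeasurableSpace X] [BorelSpace X]
    [TopologicalSpace Y] [PolishSpace Y] [MeasurableSpace Y] [BorelSpace Y]
    (ν : Measure X) [IsProbabilityMeasure ν]
    (f : X → ℝ) (hf0 : ∀ x, 0 ≤ f x) (hf : Integrable f ν)
    (κ : ℕ → Kernel X Y) (κlim : Kernel X Y)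
    [∀ n, IsMarkovKernel (κ n)] [IsMarkovKernel κlim]
    (hweak : ∀ g : BoundedContinuousFunction (X × Y) ℝ,
      Tendsto (fun n => ∫ q, g q ∂(ν.compProd (κ n))) atTop
        (𝓝 (∫ q, g q ∂(ν.compProd κlim)))) :
    ∀ g : BoundedContinuousFunction (X × Y) ℝ,
      Tendsto
        (fun n => ∫ q, g q ∂((ν.withDensity fun x => ENNReal.ofReal (f x)).compProd (κ n)))
        atTop
        (𝓝 (∫ q, g q ∂((ν.withDensity fun x => ENNReal.ofReal (f x)).compProd κlim))) := by
  intro g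
  have hfin : IsFiniteMeasure (ν.withDensity fun x => ENNReal.ofReal (f x)) := by
    refine isFiniteMeasure_withDensity ?_
    have : (∫⁻ x, ENNReal.ofReal (f x) ∂ν) = ∫⁻ x, (‖f x‖₊ : ℝ≥0∞) ∂ν :=
      lintegral_congr fun x => (Real.enorm_eq_ofReal (hf0 x)).symm
    rw [this]
    exact hf.2.ne
  -- key identity for the withDensity measure
  have key : ∀ (κ' : Kernel X Y) [IsMarkovKernel κ'],
      ∫ q, g q ∂((ν.withDensity fun x => ENNReal.ofReal (f x)).compProd κ')
        = ∫ x, f x * ∫ y, g (x, y) ∂(κ' x) ∂ν := by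
    intro κ' _
    rw [Measure.integral_compProd (g.integrable _)]
    have hm : AEMeasurable (fun x => (f x).toNNReal) ν :=
      hf.aemeasurable.real_toNNReal
    rw [show (ν.withDensity fun x => ENNReal.ofReal (f x))
        = ν.withDensity (fun x => ((fun x => (f x).toNNReal) x : ℝ≥0∞)) from rfl,
      integral_withDensity_eq_integral_smul₀ hm]
    refine integral_congr_ae (Eventually.of_forall fun x => ?_)
    simp [NNReal.smul_def, Real.coe_toNNReal _ (hf0 x)]
  -- key identity for the base measure with a bounded continuous weight
  have keyb : ∀ (κ' : Kernel X Y) [IsMarkovKernel κ'] (h : BoundedContinuousFunction X ℝ),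
      ∫ q, h q.1 * g q ∂(ν.compProd κ') = ∫ x, h x * ∫ y, g (x, y) ∂(κ' x) ∂ν := by
    intro κ' _ h
    have hint : Integrable (fun q : X × Y => h q.1 * g q) (ν.compProd κ') :=
      ((h.compContinuous ⟨Prod.fst, continuous_fst⟩) * g).integrable (ν.compProd κ')
    rw [Measure.integral_compProd hint]
    refine integral_congr_ae (Eventually.of_forall fun x => ?_)
    exact integral_const_mul (h x) fun y => g (x, y)
  -- uniform bound on the inner integral
  have hIg : ∀ (κ' : Kernel X Y) [IsMarkovKernel κ'] (x : X),
      ‖∫ y, g (x, y) ∂(κ' x)‖ ≤ ‖g‖ := by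
    intro κ' _ x
    calc ‖∫ y, g (x, y) ∂(κ' x)‖ ≤ ‖g‖ * ((κ' x) Set.univ).toReal :=
          norm_integral_le_of_norm_le_const (Eventually.of_forall fun y => g.norm_coe_le_norm _)
      _ = ‖g‖ := by simp
  -- measurability/integrability of x ↦ w x * inner integral
  have hIgm : ∀ (κ' : Kernel X Y) [IsMarkovKernel κ'],
      StronglyMeasurable (fun x => ∫ y, g (x, y) ∂(κ' x)) := by
    intro κ' _
    exact g.continuous.stronglyMeasurable.integral_kernel_prod_right'
  have hintw : ∀ (κ' : Kernel X Y) [IsMarkovKernel κ'] (w : X → ℝ), Integrable w ν →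
      Integrable (fun x => w x * ∫ y, g (x, y) ∂(κ' x)) ν := by
    intro κ' _ w hw
    have := hw.bdd_mul (hIgm κ').aestronglyMeasurable (Eventually.of_forall (hIg κ'))
    exact this.congr (Eventually.of_forall fun x => mul_comm _ _)
  -- the difference bound
  have hdiff : ∀ (κ' : Kernel X Y) [IsMarkovKernel κ'] (h : BoundedContinuousFunction X ℝ),
      |∫ q, g q ∂((ν.withDensity fun x => ENNReal.ofReal (f x)).compProd κ')
        - ∫ q, h q.1 * g q ∂(ν.compProd κ')|
        ≤ (∫ x, ‖f x - h x‖ ∂ν) * ‖g‖ := by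
    intro κ' _ h
    rw [key κ', keyb κ' h,
      ← integral_sub (hintw κ' f hf) (hintw κ' h (h.integrable ν))]
    have heq : ∀ x, f x * (∫ y, g (x, y) ∂(κ' x)) - h x * (∫ y, g (x, y) ∂(κ' x))
        = (f x - h x) * ∫ y, g (x, y) ∂(κ' x) := fun x => (sub_mul _ _ _).symm
    calc |∫ x, (f x * (∫ y, g (x, y) ∂(κ' x)) - h x * ∫ y, g (x, y) ∂(κ' x)) ∂ν|
        ≤ ∫ x, ‖f x - h x‖ * ‖g‖ ∂ν := by
          rw [← Real.norm_eq_abs]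
          refine (norm_integral_le_integral_norm _).trans ?_
          refine integral_mono_of_nonneg
            (Eventually.of_forall fun x =>
              norm_nonneg (f x * (∫ y, g (x, y) ∂(κ' x)) - h x * ∫ y, g (x, y) ∂(κ' x)))
            (((hf.sub (h.integrable ν)).norm.mul_const ‖g‖).congr
              (Eventually.of_forall fun x => rfl))
            (Eventually.of_forall fun x => ?_)
          simp only [heq x, norm_mul]
          exact mul_le_mul_of_nonneg_left (hIg κ' x) (norm_nonneg _)
      _ = (∫ x, ‖f x - h x‖ ∂ν) * ‖g‖ := integral_mul_const _ _
  -- main ε-argument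
  rw [Metric.tendsto_atTop]
  intro ε hε
  have hg1 : (0:ℝ) < ‖g‖ + 1 := by positivity
  have hε'pos : 0 < ε / (4 * (‖g‖ + 1)) := by positivity
  haveI : NormalSpace X := by letI := TopologicalSpace.upgradeIsCompletelyMetrizable X; infer_instance
  obtain ⟨h, hh, -⟩ := hf.exists_boundedContinuous_integral_sub_le hε'pos
  set hgb : BoundedContinuousFunction (X × Y) ℝ :=
    (h.compContinuous ⟨Prod.fst, continuous_fst⟩) * g with hhgb
  have hcoe : ⇑hgb = fun q : X × Y => h q.1 * g q := rfl
  have hb : (∫ x, ‖f x - h x‖ ∂ν) * ‖g‖ ≤ ε / 4 := by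
    have h1 : (∫ x, ‖f x - h x‖ ∂ν) * ‖g‖ ≤ (ε / (4 * (‖g‖ + 1))) * (‖g‖ + 1) := by
      have h0 : (0:ℝ) ≤ ∫ x, ‖f x - h x‖ ∂ν :=
        integral_nonneg fun x => norm_nonneg _
      exact mul_le_mul hh (by linarith [norm_nonneg g]) (norm_nonneg g) hε'pos.le
    have h2 : (ε / (4 * (‖g‖ + 1))) * (‖g‖ + 1) = ε / 4 := by
      field_simp
    linarith
  obtain ⟨N, hN⟩ := Metric.tendsto_atTop.1 (hweak hgb) (ε / 4) (by positivity)
  refine ⟨N, fun n hn => ?_⟩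
  have h1 := hdiff (κ n) h
  have h2 := hdiff κlim h
  have h3 := hN n hn
  rw [Real.dist_eq] at h3 ⊢
  simp only [hcoe] at h3
  set Fn := ∫ q, g q ∂((ν.withDensity fun x => ENNReal.ofReal (f x)).compProd (κ n))
  set F := ∫ q, g q ∂((ν.withDensity fun x => ENNReal.ofReal (f x)).compProd κlim)
  set Gn := ∫ q, h q.1 * g q ∂(ν.compProd (κ n))
  set G := ∫ q, h q.1 * g q ∂(ν.compProd κlim)
  have t1 : |Fn - F| ≤ |Fn - Gn| + |Gn - F| := abs_sub_le _ _ _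
  have t2 : |Gn - F| ≤ |Gn - G| + |G - F| := abs_sub_le _ _ _
  have t3 : |G - F| = |F - G| := abs_sub_comm _ _
  linarith
end

section
/- Let X, Y be Polish spaces, let ν and ν̃ be two probability measures on X, and let μ_n[dy | x] be a sequence of probability kernels from X to Y. Suppose ν ⊗ μ_n → ν ⊗ μ weakly and ν̃ ⊗ μ_n → ν̃ ⊗ μ̃ weakly. Then there exist versions of the kernels μ (with respect to ν) and μ̃ (with respect to ν̃) such that μ[· | x] = μ̃[· | x] for every x ∈ X. -/
open MeasureTheory ProbabilityTheory Filter Topology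
open scoped NNReal ENNReal

section Aux

variable {X Y : Type*}
    [TopologicalSpace X] [PolishSpace X] [MeasurableSpace X] [BorelSpace X]
    [TopologicalSpace Y] [PolishSpace Y] [MeasurableSpace Y] [BorelSpace Y]

lemma aux_map_fst (ν : Measure X) [IsFiniteMeasure ν] (κ : Kernel X Y) [IsMarkovKernel κ] :
    (ν.compProd κ).map Prod.fst = ν :=
  Measure.fst_compProd ν κ

lemma aux_integrable_fst (ν : Measure X) [IsFiniteMeasure ν] (κ : Kernel X Y) [IsMarkovKernel κ]
    {f : X → ℝ} (hf : Integrable f ν) :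
    Integrable (fun q : X × Y => f q.1) (ν.compProd κ) := by
  have h := aux_map_fst ν κ
  have hf' : Integrable f ((ν.compProd κ).map Prod.fst) := h.symm ▸ hf
  exact (integrable_map_measure hf'.aestronglyMeasurable measurable_fst.aemeasurable).mp hf'

lemma aux_integral_fst (ν : Measure X) [IsFiniteMeasure ν] (κ : Kernel X Y) [IsMarkovKernel κ]
    {f : X → ℝ} (hf : AEStronglyMeasurable f ν) :
    ∫ q, f q.1 ∂(ν.compProd κ) = ∫ x, f x ∂ν := by
  have h := aux_map_fst ν κ
  have hf' : AEStronglyMeasurable f ((ν.compProd κ).map Prod.fst) := h.symm ▸ hf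
  conv_rhs => rw [← h, integral_map measurable_fst.aemeasurable hf']

lemma aux_integrable_weight (ν : Measure X) [IsFiniteMeasure ν] (κ : Kernel X Y) [IsMarkovKernel κ]
    (d : X → ℝ) (hdi : Integrable d ν) (G : BoundedContinuousFunction (X × Y) ℝ) :
    Integrable (fun q : X × Y => d q.1 * G q) (ν.compProd κ) := by
  have h := (aux_integrable_fst ν κ hdi).bdd_mul G.continuous.aestronglyMeasurable
    (Filter.Eventually.of_forall fun q => G.norm_coe_le_norm q)
  simpa [mul_comm] using h

lemma aux_identity (ν : Measure X) [IsProbabilityMeasure ν] (κ : Kernel X Y) [IsMarkovKernel κ]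
    (d : X → ℝ≥0) (hd : Measurable d) (hdi : Integrable (fun x => (d x : ℝ)) ν)
    (G : BoundedContinuousFunction (X × Y) ℝ) :
    ∫ q, G q ∂((ν.withDensity fun x => ((d x : ℝ≥0∞))).compProd κ)
      = ∫ q, (d q.1 : ℝ) * G q ∂(ν.compProd κ) := by
  haveI : IsFiniteMeasure (ν.withDensity fun x => ((d x : ℝ≥0∞))) := by
    apply isFiniteMeasure_withDensity
    have h2 := hdi.hasFiniteIntegral
    simp only [HasFiniteIntegral, NNReal.nnnorm_eq] at h2
    simpa using h2.ne
  rw [Measure.integral_compProd (G.integrable _),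
    integral_withDensity_eq_integral_smul hd (fun x => ∫ y, G (x, y) ∂κ x),
    Measure.integral_compProd (aux_integrable_weight ν κ _ hdi G)]
  refine integral_congr_ae (Filter.Eventually.of_forall fun x => ?_)
  show d x • ∫ y, G (x, y) ∂κ x = ∫ y, ((d x : ℝ)) * G (x, y) ∂κ x
  rw [integral_const_mul, NNReal.smul_def, smul_eq_mul]

lemma aux_err (ν : Measure X) [IsProbabilityMeasure ν] (κ : Kernel X Y) [IsMarkovKernel κ]
    (d : X → ℝ≥0) (hdi : Integrable (fun x => (d x : ℝ)) ν)
    (φ : BoundedContinuousFunction X ℝ) (G : BoundedContinuousFunction (X × Y) ℝ) :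
    dist (∫ q, (d q.1 : ℝ) * G q ∂(ν.compProd κ))
         (∫ q, (φ.compContinuous (⟨Prod.fst, continuous_fst⟩ : C(X × Y, X)) * G) q
            ∂(ν.compProd κ))
      ≤ ‖G‖ * ∫ x, ‖(d x : ℝ) - φ x‖ ∂ν := by
  have hint1 := aux_integrable_weight ν κ _ hdi G
  have hint2 := aux_integrable_weight ν κ _ (φ.integrable ν) G
  have hGφ : ∀ q : X × Y,
      (φ.compContinuous (⟨Prod.fst, continuous_fst⟩ : C(X × Y, X)) * G) q = φ q.1 * G q :=
    fun q => rfl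
  have hsub : Integrable (fun x => (d x : ℝ) - φ x) ν := hdi.sub (φ.integrable ν)
  simp_rw [hGφ]
  rw [dist_eq_norm, ← integral_sub hint1 hint2]
  have heq : ∀ q : X × Y, (d q.1 : ℝ) * G q - φ q.1 * G q = ((d q.1 : ℝ) - φ q.1) * G q :=
    fun q => by ring
  simp_rw [heq]
  calc ‖∫ q, ((d q.1 : ℝ) - φ q.1) * G q ∂(ν.compProd κ)‖
      ≤ ∫ q, ‖((d q.1 : ℝ) - φ q.1) * G q‖ ∂(ν.compProd κ) := norm_integral_le_integral_norm _
    _ ≤ ∫ q, ‖G‖ * ‖(d q.1 : ℝ) - φ q.1‖ ∂(ν.compProd κ) := by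
        refine integral_mono ((aux_integrable_weight ν κ _ hsub G).norm)
          ((aux_integrable_fst ν κ hsub.norm).const_mul ‖G‖) fun q => ?_
        rw [norm_mul, mul_comm]
        gcongr
        exact G.norm_coe_le_norm q
    _ = ‖G‖ * ∫ q, ‖(d q.1 : ℝ) - φ q.1‖ ∂(ν.compProd κ) := integral_const_mul _ _
    _ = ‖G‖ * ∫ x, ‖(d x : ℝ) - φ x‖ ∂ν := by
        rw [aux_integral_fst ν κ hsub.norm.aestronglyMeasurable]

lemma aux_tendsto (ν : Measure X) [IsProbabilityMeasure ν]
    (κ : ℕ → Kernel X Y) [∀ n, IsMarkovKernel (κ n)] (μ : Kernel X Y) [IsMarkovKernel μ]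
    (h : ∀ g : BoundedContinuousFunction (X × Y) ℝ,
      Tendsto (fun n => ∫ q, g q ∂(ν.compProd (κ n))) atTop
        (𝓝 (∫ q, g q ∂(ν.compProd μ))))
    (d : X → ℝ≥0) (hd : Measurable d) (hdi : Integrable (fun x => (d x : ℝ)) ν)
    (G : BoundedContinuousFunction (X × Y) ℝ) :
    Tendsto (fun n => ∫ q, G q ∂((ν.withDensity fun x => ((d x : ℝ≥0∞))).compProd (κ n))) atTop
      (𝓝 (∫ q, G q ∂((ν.withDensity fun x => ((d x : ℝ≥0∞))).compProd μ))) := by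
  rw [aux_identity ν μ d hd hdi G]
  conv in fun n => _ => ext n; rw [aux_identity ν (κ n) d hd hdi G]
  rw [Metric.tendsto_atTop]
  intro ε hε
  haveI : NormalSpace X := by
    letI := TopologicalSpace.upgradeIsCompletelyMetrizable X
    infer_instance
  have hδ : 0 < ε / 3 / (‖G‖ + 1) := by positivity
  obtain ⟨φ, hφ1, _⟩ := hdi.exists_boundedContinuous_integral_sub_le hδ
  set Gφ : BoundedContinuousFunction (X × Y) ℝ :=
    φ.compContinuous (⟨Prod.fst, continuous_fst⟩ : C(X × Y, X)) * G with hGφdef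
  have herr : ∀ (κ' : Kernel X Y), ∀ (_ : IsMarkovKernel κ'),
      dist (∫ q, (d q.1 : ℝ) * G q ∂(ν.compProd κ')) (∫ q, Gφ q ∂(ν.compProd κ'))
        ≤ ε / 3 := by
    intro κ' hκ'
    refine le_trans (aux_err ν κ' d hdi φ G) ?_
    calc ‖G‖ * ∫ x, ‖(d x : ℝ) - φ x‖ ∂ν
        ≤ ‖G‖ * (ε / 3 / (‖G‖ + 1)) := mul_le_mul_of_nonneg_left hφ1 (norm_nonneg G)
      _ ≤ (‖G‖ + 1) * (ε / 3 / (‖G‖ + 1)) :=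
          mul_le_mul_of_nonneg_right (by linarith) hδ.le
      _ = ε / 3 := by
          field_simp
  obtain ⟨N, hN⟩ := Metric.tendsto_atTop.mp (h Gφ) (ε / 3) (by positivity)
  refine ⟨N, fun n hn => ?_⟩
  have h3 := herr (κ n) inferInstance
  have h4 := herr μ inferInstance
  have h5 := hN n hn
  rw [dist_comm] at h4
  calc dist (∫ q, (d q.1 : ℝ) * G q ∂(ν.compProd (κ n)))
        (∫ q, (d q.1 : ℝ) * G q ∂(ν.compProd μ))
      ≤ dist (∫ q, (d q.1 : ℝ) * G q ∂(ν.compProd (κ n))) (∫ q, Gφ q ∂(ν.compProd (κ n)))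
        + dist (∫ q, Gφ q ∂(ν.compProd (κ n))) (∫ q, Gφ q ∂(ν.compProd μ))
        + dist (∫ q, Gφ q ∂(ν.compProd μ)) (∫ q, (d q.1 : ℝ) * G q ∂(ν.compProd μ)) :=
      dist_triangle4 _ _ _ _
    _ < ε := by linarith

lemma aux_ext {P1 P2 : Measure (X × Y)} [IsFiniteMeasure P1] [IsFiniteMeasure P2]
    (h : ∀ G : BoundedContinuousFunction (X × Y) ℝ, ∫ q, G q ∂P1 = ∫ q, G q ∂P2) :
    P1 = P2 := by
  apply ext_of_forall_lintegral_eq_of_IsFiniteMeasure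
  intro f
  let G : BoundedContinuousFunction (X × Y) ℝ :=
    ⟨⟨fun q => (f q : ℝ), NNReal.continuous_coe.comp f.continuous⟩, by
      obtain ⟨C, hC⟩ := f.map_bounded'
      exact ⟨C, fun q q' => by
        show dist ((f q : ℝ)) ((f q' : ℝ)) ≤ C
        rw [Real.dist_eq, ← NNReal.dist_eq]
        exact hC q q'⟩⟩
  have hint1 : Integrable (fun q => (f q : ℝ)) P1 := G.integrable P1
  have hint2 : Integrable (fun q => (f q : ℝ)) P2 := G.integrable P2
  rw [lintegral_coe_eq_integral _ hint1, lintegral_coe_eq_integral _ hint2]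
  exact congrArg ENNReal.ofReal (h G)

end Aux

/-- If `ν ⊗ μ_n → ν ⊗ μ` weakly and `ν̃ ⊗ μ_n → ν̃ ⊗ μ̃` weakly, then there are versions of the
limit kernels `μ` (w.r.t. `ν`) and `μ̃` (w.r.t. `ν̃`) agreeing at every point, i.e. a single
kernel which is `ν`-a.e. equal to `μ` and `ν̃`-a.e. equal to `μ̃`. -/
theorem stmt5 {X Y : Type*}
    [TopologicalSpace X] [PolishSpace X] [MeasurableSpace X] [BorelSpace X]
    [TopologicalSpace Y] [PolishSpace Y] [MeasurableSpace Y] [BorelSpace Y]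
    (ν νt : Measure X) [IsProbabilityMeasure ν] [IsProbabilityMeasure νt]
    (κ : ℕ → Kernel X Y) [∀ n, IsMarkovKernel (κ n)]
    (μlim μtlim : Kernel X Y) [IsMarkovKernel μlim] [IsMarkovKernel μtlim]
    (h1 : ∀ g : BoundedContinuousFunction (X × Y) ℝ,
      Tendsto (fun n => ∫ q, g q ∂(ν.compProd (κ n))) atTop
        (𝓝 (∫ q, g q ∂(ν.compProd μlim))))
    (h2 : ∀ g : BoundedContinuousFunction (X × Y) ℝ,
      Tendsto (fun n => ∫ q, g q ∂(νt.compProd (κ n))) atTop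
        (𝓝 (∫ q, g q ∂(νt.compProd μtlim)))) :
    ∃ κc : Kernel X Y, IsMarkovKernel κc ∧
      (∀ᵐ x ∂ν, κc x = μlim x) ∧ (∀ᵐ x ∂νt, κc x = μtlim x) := by
  classical
  haveI hXne : Nonempty X := by
    by_contra hX
    rw [not_nonempty_iff] at hX
    have h0 : (Set.univ : Set X) = ∅ := Set.univ_eq_empty_iff.mpr hX
    have h1' := measure_univ (μ := ν)
    rw [h0] at h1'
    simp at h1'
  haveI hYne : Nonempty Y := by
    obtain ⟨x⟩ := hXne
    by_contra hY
    rw [not_nonempty_iff] at hY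
    have h0 : (Set.univ : Set Y) = ∅ := Set.univ_eq_empty_iff.mpr hY
    have h1' := measure_univ (μ := μlim x)
    rw [h0] at h1'
    simp at h1'
  obtain ⟨s, hs, hs1, hs2⟩ := Measure.mutuallySingular_singularPart ν νt
  set ρ : Measure X := νt.withDensity (ν.rnDeriv νt) with hρdef
  have hρ_le : ρ ≤ ν := Measure.withDensity_rnDeriv_le ν νt
  haveI : IsFiniteMeasure ρ :=
    ⟨lt_of_le_of_lt (Measure.le_iff'.mp hρ_le Set.univ) (measure_lt_top ν Set.univ)⟩
  have hac : ρ ≪ ν := Measure.absolutelyContinuous_of_le hρ_le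
  -- the two densities
  set d1 : X → ℝ≥0 := fun x => (ρ.rnDeriv ν x).toNNReal with hd1def
  set d2 : X → ℝ≥0 := fun x => (ν.rnDeriv νt x).toNNReal with hd2def
  have hd1 : Measurable d1 := (Measure.measurable_rnDeriv ρ ν).ennreal_toNNReal
  have hd2 : Measurable d2 := (Measure.measurable_rnDeriv ν νt).ennreal_toNNReal
  have hρ1 : ν.withDensity (fun x => ((d1 x : ℝ≥0∞))) = ρ := by
    rw [withDensity_congr_ae (g := ρ.rnDeriv ν) ?_, Measure.withDensity_rnDeriv_eq ρ ν hac]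
    filter_upwards [Measure.rnDeriv_lt_top ρ ν] with x hx
    exact ENNReal.coe_toNNReal hx.ne
  have hρ2 : νt.withDensity (fun x => ((d2 x : ℝ≥0∞))) = ρ := by
    rw [withDensity_congr_ae (g := ν.rnDeriv νt) ?_]
    filter_upwards [Measure.rnDeriv_lt_top ν νt] with x hx
    exact ENNReal.coe_toNNReal hx.ne
  have hd1i : Integrable (fun x => (d1 x : ℝ)) ν := Measure.integrable_toReal_rnDeriv
  have hd2i : Integrable (fun x => (d2 x : ℝ)) νt := Measure.integrable_toReal_rnDeriv
  -- weak convergence of `ρ ⊗ κ n` to both `ρ ⊗ μlim` and `ρ ⊗ μtlim`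
  have t1 : ∀ G : BoundedContinuousFunction (X × Y) ℝ,
      Tendsto (fun n => ∫ q, G q ∂(ρ.compProd (κ n))) atTop
        (𝓝 (∫ q, G q ∂(ρ.compProd μlim))) := by
    intro G
    have := aux_tendsto ν κ μlim h1 d1 hd1 hd1i G
    rwa [hρ1] at this
  have t2 : ∀ G : BoundedContinuousFunction (X × Y) ℝ,
      Tendsto (fun n => ∫ q, G q ∂(ρ.compProd (κ n))) atTop
        (𝓝 (∫ q, G q ∂(ρ.compProd μtlim))) := by
    intro G
    have := aux_tendsto νt κ μtlim h2 d2 hd2 hd2i G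
    rwa [hρ2] at this
  have hPeq : ρ.compProd μlim = ρ.compProd μtlim :=
    aux_ext fun G => tendsto_nhds_unique (t1 G) (t2 G)
  -- a.e. equality w.r.t. ρ
  have hfst : (ρ.compProd μlim).fst = ρ := Measure.fst_compProd ρ μlim
  have e1 : ∀ᵐ x ∂(ρ.compProd μlim).fst, μlim x = (ρ.compProd μlim).condKernel x :=
    eq_condKernel_of_measure_eq_compProd μlim (by rw [hfst])
  have e2 : ∀ᵐ x ∂(ρ.compProd μlim).fst, μtlim x = (ρ.compProd μlim).condKernel x :=
    eq_condKernel_of_measure_eq_compProd μtlim (by rw [hfst, ← hPeq])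
  rw [hfst] at e1 e2
  have hae : ∀ᵐ x ∂ρ, μlim x = μtlim x := by
    filter_upwards [e1, e2] with x hx1 hx2
    rw [hx1, hx2]
  -- the common version
  refine ⟨Kernel.piecewise hs μtlim μlim, inferInstance, ?_, ?_⟩
  · have hdecomp : ν = ν.singularPart νt + ρ := (ν.singularPart_add_rnDeriv νt).symm
    rw [hdecomp, ae_add_measure_iff]
    constructor
    · have hns : ∀ᵐ x ∂(ν.singularPart νt), x ∉ s := by
        rw [ae_iff]
        simpa using hs1
      filter_upwards [hns] with x hx
      simp [Kernel.piecewise_apply, hx]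
    · filter_upwards [hae] with x hx
      by_cases hxs : x ∈ s <;> simp [Kernel.piecewise_apply, hxs, hx]
  · have hmem : ∀ᵐ x ∂νt, x ∈ s := by
      rw [ae_iff]
      exact hs2
    filter_upwards [hmem] with x hx
    simp [Kernel.piecewise_apply, hx]
end

section
/- Let X, Y be Polish spaces, ν a probability measure on X, and μ_n[dy | x] probability kernels from X to Y such that the sequence of measures ν ⊗ μ_n on X × Y is tight. Then there exists a sequence (K^m) of compact subsets of Y such that for ν-almost every x ∈ X, lim_{m→∞} liminf_{n→∞} μ_n[(K^m)^c | x] = 0. -/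
open MeasureTheory ProbabilityTheory Filter Topology

/-- If the measures `ν ⊗ μ_n` on `X × Y` are tight, then there is a sequence `(K m)` of compact
subsets of `Y` such that for `ν`-almost every `x`,
`lim_{m → ∞} liminf_{n → ∞} μ_n[(K m)ᶜ | x] = 0`. -/
theorem stmt7 {X Y : Type*}
    [TopologicalSpace X] [PolishSpace X] [MeasurableSpace X] [BorelSpace X]
    [TopologicalSpace Y] [PolishSpace Y] [MeasurableSpace Y] [BorelSpace Y]
    (ν : Measure X) [IsProbabilityMeasure ν]
    (κ : ℕ → Kernel X Y) [∀ n, IsMarkovKernel (κ n)]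
    (htight : ∀ δ : ℝ, 0 < δ → ∃ K : Set (X × Y), IsCompact K ∧
      ∀ n, (ν.compProd (κ n)) Kᶜ < ENNReal.ofReal δ) :
    ∃ K : ℕ → Set Y, (∀ m, IsCompact (K m)) ∧
      ∀ᵐ x ∂ν, Tendsto (fun m => Filter.liminf (fun n => (κ n) x (K m)ᶜ) atTop) atTop
        (𝓝 (0 : ENNReal)) := by
  choose K' hK'c hK'lt using fun m : ℕ => htight ((1/2)^m) (by positivity)
  set K : ℕ → Set Y := fun m => Prod.snd '' (K' m) with hKdef
  have hKcomp : ∀ m, IsCompact (K m) := fun m => (hK'c m).image continuous_snd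
  refine ⟨K, hKcomp, ?_⟩
  set f : ℕ → X → ENNReal := fun m x => Filter.liminf (fun n => (κ n) x (K m)ᶜ) atTop
    with hfdef
  have hKmeas : ∀ m, MeasurableSet (K m)ᶜ := fun m =>
    (hKcomp m).isClosed.measurableSet.compl
  have hmeas : ∀ m n, Measurable (fun x => (κ n) x (K m)ᶜ) := fun m n =>
    Kernel.measurable_coe _ (hKmeas m)
  have hfmeas : ∀ m, Measurable (f m) := fun m => Measurable.liminf (hmeas m)
  have hint : ∀ m, ∫⁻ x, f m x ∂ν ≤ ENNReal.ofReal ((1/2)^m) := by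
    intro m
    have h1 : ∀ n, ∫⁻ x, (κ n) x (K m)ᶜ ∂ν ≤ ENNReal.ofReal ((1/2)^m) := by
      intro n
      have hsub : ∀ x, (K m)ᶜ ⊆ Prod.mk x ⁻¹' (K' m)ᶜ := by
        intro x y hy hxy
        exact hy ⟨(x, y), hxy, rfl⟩
      calc ∫⁻ x, (κ n) x (K m)ᶜ ∂ν
          ≤ ∫⁻ x, (κ n) x (Prod.mk x ⁻¹' (K' m)ᶜ) ∂ν :=
            lintegral_mono fun x => measure_mono (hsub x)
        _ = (ν.compProd (κ n)) (K' m)ᶜ :=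
            (Measure.compProd_apply (hK'c m).isClosed.measurableSet.compl).symm
        _ ≤ ENNReal.ofReal ((1/2)^m) := (hK'lt m n).le
    calc ∫⁻ x, f m x ∂ν
        ≤ liminf (fun n => ∫⁻ x, (κ n) x (K m)ᶜ ∂ν) atTop := lintegral_liminf_le (hmeas m)
      _ ≤ liminf (fun _ : ℕ => ENNReal.ofReal ((1/2)^m)) atTop :=
          liminf_le_liminf (Filter.Eventually.of_forall h1)
      _ = ENNReal.ofReal ((1/2)^m) := liminf_const _
  have hsum : ∫⁻ x, ∑' m, f m x ∂ν < ⊤ := by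
    rw [lintegral_tsum (fun m => (hfmeas m).aemeasurable)]
    calc ∑' m, ∫⁻ x, f m x ∂ν ≤ ∑' m : ℕ, ENNReal.ofReal ((1/2)^m) :=
          ENNReal.tsum_le_tsum hint
      _ = ENNReal.ofReal (∑' m : ℕ, (1/2 : ℝ)^m) :=
          (ENNReal.ofReal_tsum_of_nonneg (fun m => by positivity)
            (summable_geometric_of_lt_one (by norm_num) (by norm_num))).symm
      _ < ⊤ := ENNReal.ofReal_lt_top
  have hae : ∀ᵐ x ∂ν, ∑' m, f m x < ⊤ :=
    ae_lt_top (Measurable.ennreal_tsum hfmeas) hsum.ne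
  filter_upwards [hae] with x hx
  exact ENNReal.tendsto_atTop_zero_of_tsum_ne_top hx.ne
end

section
/- Let X, Y be Polish spaces, ν a probability measure on X, and μ_n[dy | x] a sequence of probability kernels from X to Y. Suppose (i) the sequence of measures ν ⊗ μ_n on X × Y is tight, and (ii) the maps x ↦ μ_n[· | x], viewed as maps from X to the space of probability measures on Y with the Prokhorov metric, are equicontinuous in n. Then there exists a subsequence (n_k) such that μ_{n_k}[· | x] converges weakly for ν-almost every x ∈ X. -/
open MeasureTheory ProbabilityTheory Filter Topology

section Aux
open Set Metric TopologicalSpace BoundedContinuousFunction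

noncomputable section


abbrev HCube : Type := ℕ → unitInterval

lemma exists_cube_embedding (Y : Type*) [MetricSpace Y] [SeparableSpace Y] [Nonempty Y] :
    ∃ e : Y → HCube, UniformContinuous e ∧ Function.Injective e ∧ IsInducing e := by
  set u : ℕ → Y := denseSeq Y with hu
  have hdense : DenseRange u := denseRange_denseSeq Y
  set e : Y → HCube := fun y i => ⟨min (dist y (u i)) 1,
    ⟨le_min dist_nonneg zero_le_one, min_le_right _ _⟩⟩ with he
  have hcoord : ∀ i y, ((e y i : ℝ)) = min (dist y (u i)) 1 := fun _ _ => rfl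
  have huc : UniformContinuous e := by
    rw [uniformContinuous_pi]
    intro i
    apply UniformContinuous.subtype_mk
    exact ((LipschitzWith.dist_left (u i)).min_const 1).uniformContinuous
  have hkey : ∀ y z : Y, ∀ ε : ℝ, 0 < ε → ε ≤ 1 →
      (∃ i, dist (e z i : ℝ) (e y i : ℝ) < ε / 4 ∧ dist y (u i) < ε / 4) → dist z y < ε := by
    intro y z ε hε hε1 ⟨i, hi, hyi⟩
    have h1 : min (dist y (u i)) 1 = dist y (u i) :=
      min_eq_left (hyi.le.trans (by linarith))
    have h2 : |min (dist z (u i)) 1 - min (dist y (u i)) 1| < ε / 4 := by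
      simpa [hcoord, Real.dist_eq] using hi
    rw [h1] at h2
    have h3 : min (dist z (u i)) 1 < ε / 4 + ε / 4 := by
      cases abs_lt.1 h2 with
      | intro h _ => linarith [abs_lt.1 h2]
    have h4 : dist z (u i) < ε / 2 := by
      rcases min_cases (dist z (u i)) 1 with ⟨hmin, _⟩ | ⟨hmin, hge⟩
      · rw [hmin] at h3; linarith
      · rw [hmin] at h3; linarith
    calc dist z y ≤ dist z (u i) + dist y (u i) := dist_triangle_right _ _ _
      _ < ε := by linarith
  have hinj : Function.Injective e := by
    intro y z hyz
    rw [← dist_le_zero]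
    by_contra h
    push_neg at h
    set ε := min (dist y z) 1 with hε
    have hεpos : 0 < ε := lt_min h zero_lt_one
    have hε1 : ε ≤ 1 := min_le_right _ _
    obtain ⟨i, hi⟩ := hdense.exists_dist_lt y (by positivity : (0:ℝ) < ε / 4)
    have : dist z y < ε := hkey y z ε hεpos hε1
      ⟨i, by rw [hyz]; simpa using hεpos, by simpa [dist_comm] using hi⟩
    rw [dist_comm] at this
    exact absurd this (not_lt.2 (min_le_left _ _))
  refine ⟨e, huc, hinj, ?_⟩
  rw [isInducing_iff_nhds]
  intro y
  refine le_antisymm ?_ ?_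
  · exact (huc.continuous.tendsto y).le_comap
  · intro S hS
    obtain ⟨ε₀, hε₀, hball⟩ := Metric.mem_nhds_iff.1 hS
    set ε := min ε₀ 1 with hεdef
    have hεpos : 0 < ε := lt_min hε₀ zero_lt_one
    obtain ⟨i, hi⟩ := hdense.exists_dist_lt y (by positivity : (0:ℝ) < ε / 4)
    rw [Filter.mem_comap]
    refine ⟨(fun h : HCube => (h i : ℝ)) ⁻¹' Metric.ball (e y i : ℝ) (ε / 4), ?_, ?_⟩
    · apply IsOpen.mem_nhds
      · exact (Metric.isOpen_ball).preimage ((continuous_subtype_val).comp (continuous_apply i))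
      · simp [Metric.mem_ball, hεpos]
    · intro z hz
      apply hball
      simp only [Set.mem_preimage, Metric.mem_ball] at hz
      have : dist z y < ε := hkey y z ε hεpos (min_le_right _ _)
        ⟨i, hz, by simpa [dist_comm] using hi⟩
      exact Metric.mem_ball.2 (this.trans_le (min_le_left _ _))



lemma lp_integral_comparison {Y : Type*} [MetricSpace Y] [MeasurableSpace Y]
    [OpensMeasurableSpace Y] (μ ν : Measure Y) [IsProbabilityMeasure μ] [IsProbabilityMeasure ν]
    (g : Y →ᵇ ℝ) (g_nn : ∀ y, 0 ≤ g y) {ε ω : ℝ} (hε : 0 < ε) (hω : 0 ≤ ω)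
    (hmod : ∀ y y' : Y, dist y y' < ε → |g y - g y'| ≤ ω)
    (hLP : levyProkhorovEDist μ ν < ENNReal.ofReal ε) :
    ∫ y, g y ∂μ ≤ (∫ y, g y ∂ν) + ω + ε * ‖g‖ := by
  have step1 := BoundedContinuousFunction.integral_le_of_levyProkhorovEDist_lt μ ν hε hLP g
    (Eventually.of_forall g_nn)
  set g₂ : Y →ᵇ ℝ := g + BoundedContinuousFunction.const Y ω with hg₂
  have hg₂app : ∀ y, g₂ y = g y + ω := fun y => rfl
  -- pointwise comparison of the thickening integrand
  have hsub : ∀ t : ℝ, thickening ε {a | t ≤ g a} ⊆ {a | t ≤ g₂ a} := by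
    intro t y hy
    obtain ⟨z, hz, hdz⟩ := Metric.mem_thickening_iff.1 hy
    have := hmod z y (by rwa [dist_comm])
    have h2 : g z - g y ≤ ω := (abs_le.1 this).2
    simp only [Set.mem_setOf_eq] at hz ⊢
    rw [hg₂app]; linarith
  have key : ∀ t : ℝ, ENNReal.toReal (ν (thickening ε {a | t ≤ g a}))
      ≤ ENNReal.toReal (ν {a | t ≤ g₂ a}) := fun t =>
    ENNReal.toReal_mono (measure_ne_top _ _) (measure_mono (hsub t))
  -- integrability
  have intbleA : IntegrableOn (fun t => ENNReal.toReal (ν (thickening ε {a | t ≤ g a})))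
      (Ioc 0 ‖g‖) := by
    apply Measure.integrableOn_of_bounded (M := ENNReal.toReal (ν univ)) measure_Ioc_lt_top.ne
    · apply (Measurable.ennreal_toReal (Antitone.measurable ?_)).aestronglyMeasurable
      exact fun _ _ hst => measure_mono <| thickening_subset_of_subset ε (fun _ h => hst.trans h)
    · apply Eventually.of_forall <| fun t => ?_
      simp only [Real.norm_eq_abs, ENNReal.abs_toReal]
      exact ENNReal.toReal_mono (measure_ne_top _ _) <| measure_mono (subset_univ _)
  have intbleB : ∀ M : ℝ, IntegrableOn (fun t => ENNReal.toReal (ν {a | t ≤ g₂ a})) (Ioc 0 M) := by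
    intro M
    apply Measure.integrableOn_of_bounded (M := ENNReal.toReal (ν univ)) measure_Ioc_lt_top.ne
    · apply (Measurable.ennreal_toReal (Antitone.measurable ?_)).aestronglyMeasurable
      exact fun _ _ hst => measure_mono (fun _ h => hst.trans h)
    · apply Eventually.of_forall <| fun t => ?_
      simp only [Real.norm_eq_abs, ENNReal.abs_toReal]
      exact ENNReal.toReal_mono (measure_ne_top _ _) <| measure_mono (subset_univ _)
  have step2 : ∫ t in Ioc 0 ‖g‖, ENNReal.toReal (ν (thickening ε {a | t ≤ g a}))
      ≤ ∫ t in Ioc 0 ‖g‖, ENNReal.toReal (ν {a | t ≤ g₂ a}) :=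
    setIntegral_mono intbleA (intbleB ‖g‖) key
  have step3 : ∫ t in Ioc 0 ‖g‖, ENNReal.toReal (ν {a | t ≤ g₂ a})
      ≤ ∫ t in Ioc 0 (‖g‖ + ω), ENNReal.toReal (ν {a | t ≤ g₂ a}) := by
    apply setIntegral_mono_set (intbleB (‖g‖ + ω))
    · exact Eventually.of_forall (fun t => ENNReal.toReal_nonneg)
    · exact HasSubset.Subset.eventuallyLE (Ioc_subset_Ioc_right (by linarith))
  have step4 : ∫ t in Ioc 0 (‖g‖ + ω), ENNReal.toReal (ν {a | t ≤ g₂ a}) = ∫ y, g₂ y ∂ν := by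
    rw [eq_comm]
    apply Integrable.integral_eq_integral_Ioc_meas_le (g₂.integrable ν)
      (Eventually.of_forall (fun y => by simp only [Pi.zero_apply, hg₂app]; linarith [g_nn y]))
      (Eventually.of_forall (fun y => ?_))
    simp only [hg₂app]
    have := BoundedContinuousFunction.apply_le_norm g y
    linarith
  have step5 : ∫ y, g₂ y ∂ν = (∫ y, g y ∂ν) + ω := by
    simp only [hg₂app]
    rw [integral_add (g.integrable ν) (integrable_const ω)]
    simp [integral_const]
  calc ∫ y, g y ∂μ ≤ (∫ t in Ioc 0 ‖g‖, ENNReal.toReal (ν (thickening ε {a | t ≤ g a}))) + ε * ‖g‖ :=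
        step1
    _ ≤ (∫ y, g y ∂ν) + ω + ε * ‖g‖ := by
        have := (step2.trans step3).trans (le_of_eq (step4.trans step5))
        linarith


lemma equi_transfer {X Y : Type*} [MetricSpace X] [MetricSpace Y] [MeasurableSpace X]
    [MeasurableSpace Y] [OpensMeasurableSpace Y]
    (κ : ℕ → Kernel X Y) [∀ n, IsMarkovKernel (κ n)]
    (hequi : ∀ ε : ℝ, 0 < ε → ∃ δ : ℝ, 0 < δ ∧ ∀ n : ℕ, ∀ x x' : X, dist x x' < δ →
      levyProkhorovDist ((κ n) x) ((κ n) x') < ε)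
    (g : Y →ᵇ ℝ) (hg : UniformContinuous ⇑g) {ε : ℝ} (hε : 0 < ε) :
    ∃ δ : ℝ, 0 < δ ∧ ∀ n : ℕ, ∀ x x' : X, dist x x' < δ →
      |(∫ y, g y ∂(κ n x)) - ∫ y, g y ∂(κ n x')| ≤ ε := by
  set g' : Y →ᵇ ℝ := g + BoundedContinuousFunction.const Y ‖g‖ with hg'
  have hg'app : ∀ y, g' y = g y + ‖g‖ := fun _ => rfl
  have hg'nn : ∀ y, 0 ≤ g' y := by
    intro y
    have := abs_le.1 (g.norm_coe_le_norm y)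
    rw [hg'app]; linarith [this.1]
  obtain ⟨δ₁, hδ₁, hδ₁mod⟩ := Metric.uniformContinuous_iff.1 hg (ε/2) (by positivity)
  set ε' : ℝ := min δ₁ (ε / (2 * (‖g'‖ + 1))) with hε'
  have hε'pos : 0 < ε' := lt_min hδ₁ (by positivity)
  obtain ⟨δ, hδ, hδprop⟩ := hequi ε' hε'pos
  refine ⟨δ, hδ, fun n x x' hxx' => ?_⟩
  have hLPd := hδprop n x x' hxx'
  -- convert to edist bounds, both directions
  have hED : levyProkhorovEDist ((κ n) x) ((κ n) x') < ENNReal.ofReal ε' := by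
    rw [show levyProkhorovDist ((κ n) x) ((κ n) x')
        = (levyProkhorovEDist ((κ n) x) ((κ n) x')).toReal from rfl] at hLPd
    exact (ENNReal.lt_ofReal_iff_toReal_lt (levyProkhorovEDist_ne_top _ _)).2 hLPd
  have hED' : levyProkhorovEDist ((κ n) x') ((κ n) x) < ENNReal.ofReal ε' := by
    rwa [levyProkhorovEDist_comm]
  have hmod' : ∀ y y' : Y, dist y y' < ε' → |g' y - g' y'| ≤ ε / 2 := by
    intro y y' hd
    have : dist (g y) (g y') < ε / 2 := hδ₁mod (hd.trans_le (min_le_left _ _))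
    rw [Real.dist_eq] at this
    have heq : g' y - g' y' = g y - g y' := by rw [hg'app, hg'app]; ring
    rw [heq]; exact this.le
  have hcomp1 := lp_integral_comparison ((κ n) x) ((κ n) x') g' hg'nn hε'pos
    (by positivity) hmod' hED
  have hcomp2 := lp_integral_comparison ((κ n) x') ((κ n) x) g' hg'nn hε'pos
    (by positivity) hmod' hED'
  have hbound : ε' * ‖g'‖ ≤ ε / 2 := by
    have h1 : ε' ≤ ε / (2 * (‖g'‖ + 1)) := min_le_right _ _
    have h2 : (0:ℝ) ≤ ‖g'‖ := norm_nonneg _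
    calc ε' * ‖g'‖ ≤ (ε / (2 * (‖g'‖ + 1))) * ‖g'‖ := by nlinarith
      _ ≤ ε / 2 := by
          rw [div_mul_eq_mul_div, div_le_div_iff₀ (by positivity) (by norm_num)]
          nlinarith
  -- difference of g-integrals equals difference of g'-integrals
  have hshift : ∀ (ρ : Measure Y) [IsProbabilityMeasure ρ], ∫ y, g' y ∂ρ = (∫ y, g y ∂ρ) + ‖g‖ := by
    intro ρ hρ
    simp only [hg'app]
    rw [integral_add (g.integrable ρ) (integrable_const _)]
    simp [integral_const]
  rw [hshift ((κ n) x), hshift ((κ n) x')] at hcomp1 hcomp2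
  rw [abs_le]
  constructor <;> nlinarith [hcomp1, hcomp2, hbound]






/-- The collection of test functions dominating the indicator of `K`. -/
def cubeTest (K : Set HCube) : Set C(HCube, ℝ) :=
  {f | (∀ h, 0 ≤ f h) ∧ ∀ h ∈ K, 1 ≤ f h}

lemma exists_measure_of_functional (L : C(HCube, ℝ) → ℝ)
    (hadd : ∀ f g, L (f + g) = L f + L g)
    (hmono : ∀ f g : C(HCube, ℝ), (∀ h, f h ≤ g h) → L f ≤ L g)
    (hone : L 1 = 1) :
    ∃ σ : Measure HCube, IsProbabilityMeasure σ ∧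
      ∀ G : Set HCube, IsOpen G → σ G ≤
        ⨆ (f : C(HCube, ℝ)) (_ : (∀ h, 0 ≤ f h ∧ f h ≤ 1) ∧ ∀ h ∉ G, f h = 0),
          ENNReal.ofReal (L f) := by
  have hzero : L 0 = 0 := by
    have := hadd 0 0
    simp only [add_zero] at this
    linarith
  have hLnn : ∀ f : C(HCube, ℝ), (∀ h, 0 ≤ f h) → 0 ≤ L f := by
    intro f hf
    rw [← hzero]
    exact hmono 0 f (by simpa using hf)
  set lam0 : Set HCube → ℝ := fun K => sInf (L '' cubeTest K) with hlam0
  have hne : ∀ K : Set HCube, (L '' cubeTest K).Nonempty := by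
    intro K
    exact ⟨L 1, ⟨1, ⟨fun h => by norm_num, fun h _ => by norm_num⟩, rfl⟩⟩
  have hbdd : ∀ K : Set HCube, ∀ r ∈ L '' cubeTest K, 0 ≤ r := by
    rintro K r ⟨f, hf, rfl⟩
    exact hLnn f hf.1
  have hbddBelow : ∀ K : Set HCube, BddBelow (L '' cubeTest K) :=
    fun K => ⟨0, fun r hr => hbdd K r hr⟩
  have hlam0nn : ∀ K, 0 ≤ lam0 K := fun K => le_csInf (hne K) (hbdd K)
  have hlam0le : ∀ (K : Set HCube) (f : C(HCube,ℝ)), f ∈ cubeTest K → lam0 K ≤ L f :=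
    fun K f hf => csInf_le (hbddBelow K) ⟨f, hf, rfl⟩
  have hlam0mono : ∀ K₁ K₂ : Set HCube, K₁ ⊆ K₂ → lam0 K₁ ≤ lam0 K₂ := by
    intro K₁ K₂ hsub
    apply le_csInf (hne K₂)
    rintro r ⟨f, hf, rfl⟩
    exact hlam0le K₁ f ⟨hf.1, fun h hh => hf.2 h (hsub hh)⟩
  have hlam0subadd : ∀ K₁ K₂ : Set HCube, lam0 (K₁ ∪ K₂) ≤ lam0 K₁ + lam0 K₂ := by
    intro K₁ K₂
    rw [← sub_le_iff_le_add]
    apply le_csInf (hne K₁)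
    rintro r ⟨f₁, hf₁, rfl⟩
    rw [sub_le_iff_le_add, add_comm, ← sub_le_iff_le_add]
    apply le_csInf (hne K₂)
    rintro r ⟨f₂, hf₂, rfl⟩
    rw [sub_le_iff_le_add]
    rw [← hadd]
    apply hlam0le
    constructor
    · intro h; have := hf₁.1 h; have := hf₂.1 h
      simp only [ContinuousMap.add_apply]; linarith
    · intro h hh
      simp only [ContinuousMap.add_apply]
      rcases hh with hh | hh
      · have := hf₁.2 h hh; have := hf₂.1 h; linarith
      · have := hf₂.2 h hh; have := hf₁.1 h; linarith
  have hlam0super : ∀ K₁ K₂ : Set HCube, IsClosed K₁ → IsClosed K₂ → Disjoint K₁ K₂ →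
      lam0 K₁ + lam0 K₂ ≤ lam0 (K₁ ∪ K₂) := by
    intro K₁ K₂ hc₁ hc₂ hdisj
    obtain ⟨u, hu0, hu1, hu01⟩ := exists_continuous_zero_one_of_isClosed hc₂ hc₁ hdisj.symm
    apply le_csInf (hne (K₁ ∪ K₂))
    rintro r ⟨f, hf, rfl⟩
    have h1 : lam0 K₁ ≤ L (f * u) := by
      apply hlam0le
      constructor
      · intro h
        exact mul_nonneg (hf.1 h) (hu01 h).1
      · intro h hh
        have : u h = 1 := hu1 hh
        simp only [ContinuousMap.mul_apply, this, mul_one]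
        exact hf.2 h (Or.inl hh)
    have h2 : lam0 K₂ ≤ L (f - f * u) := by
      apply hlam0le
      constructor
      · intro h
        simp only [ContinuousMap.sub_apply, ContinuousMap.mul_apply]
        have h01 := hu01 h
        nlinarith [hf.1 h, h01.1, h01.2]
      · intro h hh
        have : u h = 0 := hu0 hh
        simp only [ContinuousMap.sub_apply, ContinuousMap.mul_apply, this, mul_zero, sub_zero]
        exact hf.2 h (Or.inr hh)
    have h3 : L (f * u) + L (f - f * u) = L f := by
      rw [← hadd]
      congr 1
      ext h
      simp only [ContinuousMap.add_apply, ContinuousMap.sub_apply]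
      ring
    linarith
  -- build the content
  set Λ : Content HCube :=
    { toFun := fun K => Real.toNNReal (lam0 K)
      mono' := fun K₁ K₂ h => Real.toNNReal_mono (hlam0mono _ _ h)
      sup_disjoint' := by
        intro K₁ K₂ hdisj hc₁ hc₂
        apply le_antisymm
        · exact le_trans (Real.toNNReal_mono (hlam0subadd _ _)) (Real.toNNReal_add_le)
        · rw [← Real.toNNReal_add (hlam0nn _) (hlam0nn _)]
          exact Real.toNNReal_mono (hlam0super _ _ hc₁ hc₂ hdisj)
      sup_le' := fun K₁ K₂ =>
        le_trans (Real.toNNReal_mono (hlam0subadd _ _)) (Real.toNNReal_add_le) } with hΛ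
  have hΛval : ∀ K : TopologicalSpace.Compacts HCube,
      (Λ K : ENNReal) = ENNReal.ofReal (lam0 K) := fun K => rfl
  refine ⟨Λ.measure, ?_, ?_⟩
  · constructor
    rw [Content.measure_apply _ MeasurableSet.univ,
      Λ.outerMeasure_of_isOpen univ isOpen_univ]
    apply le_antisymm
    · apply iSup₂_le
      intro K _
      rw [hΛval]
      have : lam0 K ≤ 1 := by
        have := hlam0le K 1 ⟨fun h => by norm_num, fun h _ => by norm_num⟩
        rwa [hone] at this
      calc ENNReal.ofReal (lam0 K) ≤ ENNReal.ofReal 1 := ENNReal.ofReal_le_ofReal this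
        _ = 1 := by norm_num
    · have hK : (⟨univ, isCompact_univ⟩ : TopologicalSpace.Compacts HCube).carrier ⊆
          (⟨univ, isOpen_univ⟩ : TopologicalSpace.Opens HCube) := subset_rfl
      refine le_trans ?_ (le_iSup₂ (⟨univ, isCompact_univ⟩ : TopologicalSpace.Compacts HCube) hK)
      rw [hΛval]
      have : (1:ℝ) ≤ lam0 univ := by
        apply le_csInf (hne univ)
        rintro r ⟨f, hf, rfl⟩
        rw [← hone]
        exact hmono 1 f (fun h => by simpa using hf.2 h (mem_univ h))
      calc (1 : ENNReal) = ENNReal.ofReal 1 := by norm_num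
        _ ≤ ENNReal.ofReal (lam0 univ) := ENNReal.ofReal_le_ofReal this
  · intro G hG
    rw [Content.measure_apply _ hG.measurableSet, Λ.outerMeasure_of_isOpen G hG]
    apply iSup₂_le
    intro K hKG
    -- Urysohn: 1 on K, 0 outside G
    obtain ⟨u, hu0, hu1, hu01⟩ := exists_continuous_zero_one_of_isClosed
      (isClosed_compl_iff.2 hG) K.isCompact.isClosed
      (disjoint_compl_left_iff.2 hKG)
    have humem : u ∈ cubeTest K := ⟨fun h => (hu01 h).1, fun h hh => (hu1 hh).ge⟩
    rw [hΛval]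
    refine le_trans (ENNReal.ofReal_le_ofReal (hlam0le _ u humem)) ?_
    exact le_iSup₂ (f := fun (f : C(HCube,ℝ)) _ => ENNReal.ofReal (L f)) u
      ⟨fun h => ⟨(hu01 h).1, (hu01 h).2⟩, fun h hh => hu0 hh⟩


end
end Aux

section Main
open Set Metric TopologicalSpace BoundedContinuousFunction

/-- If the measures `ν ⊗ μ_n` are tight and the kernels `x ↦ μ_n[· | x]` are equicontinuous
(in `n`) as maps to the space of probability measures with the Lévy–Prokhorov metric, then
there is a subsequence along which `μ_{n_k}[· | x]` converges weakly for `ν`-a.e. `x`. -/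
theorem stmt10 {X Y : Type*}
    [MetricSpace X] [PolishSpace X] [MeasurableSpace X] [BorelSpace X]
    [MetricSpace Y] [PolishSpace Y] [MeasurableSpace Y] [BorelSpace Y]
    (ν : Measure X) [IsProbabilityMeasure ν]
    (κ : ℕ → Kernel X Y) [∀ n, IsMarkovKernel (κ n)]
    (htight : ∀ δ : ℝ, 0 < δ → ∃ K : Set (X × Y), IsCompact K ∧
      ∀ n, (ν.compProd (κ n)) Kᶜ < ENNReal.ofReal δ)
    (hequi : ∀ ε : ℝ, 0 < ε → ∃ δ : ℝ, 0 < δ ∧ ∀ n : ℕ, ∀ x x' : X, dist x x' < δ →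
      levyProkhorovDist ((κ n) x) ((κ n) x') < ε) :
    ∃ φ : ℕ → ℕ, StrictMono φ ∧
      ∀ᵐ x ∂ν, ∃ μx : Measure Y, IsProbabilityMeasure μx ∧
        ∀ g : BoundedContinuousFunction Y ℝ,
          Tendsto (fun k => ∫ y, g y ∂((κ (φ k)) x)) atTop (𝓝 (∫ y, g y ∂μx)) := by
    classical
  -- nonemptiness
  have hXne : Nonempty X := by
    by_contra h
    rw [not_nonempty_iff] at h
    have h1 : ν univ = 1 := measure_univ
    rw [Set.univ_eq_empty_iff.2 h, measure_empty] at h1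
    exact zero_ne_one h1
  have hYne : Nonempty Y := by
    by_contra h
    rw [not_nonempty_iff] at h
    have h1 : (κ 0 (Classical.arbitrary X)) univ = 1 := measure_univ
    rw [Set.univ_eq_empty_iff.2 h, measure_empty] at h1
    exact zero_ne_one h1
  -- the cube embedding
  obtain ⟨e, he_uc, he_inj, he_ind⟩ := exists_cube_embedding Y
  have he_cont : Continuous e := he_uc.continuous
  have he_me : MeasurableEmbedding e := he_cont.measurableEmbedding he_inj
  -- the tightness compacts
  choose K hKcomp hKbound using fun m : ℕ => htight ((1/8 : ℝ)^m) (by positivity)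
  set C : ℕ → Set Y := fun m => Prod.snd '' K m with hCdef
  have hCcomp : ∀ m, IsCompact (C m) := fun m => (hKcomp m).image continuous_snd
  have hCmeas : ∀ m, MeasurableSet ((C m)ᶜ) := fun m => (hCcomp m).isClosed.measurableSet.compl
  have hint : ∀ n m, ∫⁻ x, (κ n) x ((C m)ᶜ) ∂ν ≤ ENNReal.ofReal ((1/8 : ℝ)^m) := by
    intro n m
    have hms : MeasurableSet ((univ : Set X) ×ˢ (C m)ᶜ) := MeasurableSet.univ.prod (hCmeas m)
    have hpre : ∀ x : X, Prod.mk x ⁻¹' ((univ : Set X) ×ˢ (C m)ᶜ) = (C m)ᶜ := by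
      intro x; ext y; simp
    have h1 : ∫⁻ x, (κ n) x ((C m)ᶜ) ∂ν = (ν.compProd (κ n)) ((univ : Set X) ×ˢ (C m)ᶜ) := by
      rw [Measure.compProd_apply hms]
      exact lintegral_congr fun x => by rw [hpre x]
    have hsub : (univ : Set X) ×ˢ (C m)ᶜ ⊆ (K m)ᶜ := by
      rintro ⟨x, y⟩ ⟨-, hy⟩ hmem
      exact hy ⟨(x, y), hmem, rfl⟩
    rw [h1]
    exact le_trans (measure_mono hsub) (hKbound m n).le
  -- dense sequences
  set D : ℕ → X := denseSeq X with hDdef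
  have hD : DenseRange D := denseRange_denseSeq X
  set F : ℕ → C(HCube, ℝ) := denseSeq C(HCube, ℝ) with hFdef
  have hF : DenseRange F := denseRange_denseSeq C(HCube, ℝ)
  -- test functions on Y
  set fe : C(HCube, ℝ) → (Y →ᵇ ℝ) :=
    fun f => (BoundedContinuousFunction.mkOfCompact f).compContinuous ⟨e, he_cont⟩ with hfedef
  have hfe_app : ∀ f y, fe f y = f (e y) := fun _ _ => rfl
  have hfe_uc : ∀ f, UniformContinuous ⇑(fe f) := fun f =>
    (CompactSpace.uniformContinuous_of_continuous (BoundedContinuousFunction.mkOfCompact f).continuous).comp he_uc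
  have hfe_bound : ∀ (f : C(HCube, ℝ)) (y : Y), ‖fe f y‖ ≤ ‖f‖ := by
    intro f y
    rw [hfe_app]
    have := BoundedContinuousFunction.norm_coe_le_norm (BoundedContinuousFunction.mkOfCompact f) (e y)
    rwa [BoundedContinuousFunction.norm_mkOfCompact] at this
  have hint_bound : ∀ (f : C(HCube, ℝ)) (ρ : Measure Y) [IsProbabilityMeasure ρ],
      |∫ y, fe f y ∂ρ| ≤ ‖f‖ := by
    intro f ρ hρ
    have := norm_integral_le_of_norm_le_const (μ := ρ) (C := ‖f‖)
      (Eventually.of_forall (hfe_bound f))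
    simpa using this
  -- subsequence extraction via sequential compactness
  set T : ℕ → (ℕ × ℕ) → ℝ := fun n p => ∫ y, fe (F p.2) y ∂((κ n) (D p.1)) with hTdef
  have hTmem : ∀ n, T n ∈ univ.pi (fun p : ℕ × ℕ => Icc (-‖F p.2‖) ‖F p.2‖) := by
    intro n
    rw [Set.mem_univ_pi]
    intro p
    exact abs_le.1 (hint_bound (F p.2) ((κ n) (D p.1)))
  obtain ⟨a, -, φ, hφmono, hφconv⟩ :=
    (isCompact_univ_pi (fun p : ℕ × ℕ => isCompact_Icc)).tendsto_subseq hTmem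
  have hconv_coord : ∀ i j : ℕ,
      Tendsto (fun k => ∫ y, fe (F j) y ∂((κ (φ k)) (D i))) atTop (𝓝 (a (i, j))) := by
    intro i j
    have := (tendsto_pi_nhds.1 hφconv) (i, j)
    simpa [Function.comp, hTdef] using this
  -- equicontinuity transfer bound, point-to-point
  have hCauchyF : ∀ (j : ℕ) (x : X), CauchySeq (fun k => ∫ y, fe (F j) y ∂((κ (φ k)) x)) := by
    intro j x
    rw [Metric.cauchySeq_iff]
    intro ε hε
    obtain ⟨δ, hδ, hδprop⟩ := equi_transfer κ hequi (fe (F j)) (hfe_uc (F j))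
      (ε := ε/4) (by positivity)
    obtain ⟨i, hi⟩ := hD.exists_dist_lt x (by positivity : (0:ℝ) < δ)
    have hc : CauchySeq (fun k => ∫ y, fe (F j) y ∂((κ (φ k)) (D i))) :=
      (hconv_coord i j).cauchySeq
    obtain ⟨N, hN⟩ := Metric.cauchySeq_iff.1 hc (ε/4) (by positivity)
    refine ⟨N, fun k hk l hl => ?_⟩
    have h1 := hδprop (φ k) x (D i) hi
    have h2 := hδprop (φ l) x (D i) hi
    have h3 := hN k hk l hl
    rw [Real.dist_eq] at h3 ⊢
    have e1 := abs_sub_abs_le_abs_sub (∫ y, fe (F j) y ∂((κ (φ k)) x)) 0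
    calc |(∫ y, fe (F j) y ∂((κ (φ k)) x)) - ∫ y, fe (F j) y ∂((κ (φ l)) x)|
        ≤ |(∫ y, fe (F j) y ∂((κ (φ k)) x)) - ∫ y, fe (F j) y ∂((κ (φ k)) (D i))|
          + |(∫ y, fe (F j) y ∂((κ (φ k)) (D i))) - ∫ y, fe (F j) y ∂((κ (φ l)) (D i))|
          + |(∫ y, fe (F j) y ∂((κ (φ l)) (D i))) - ∫ y, fe (F j) y ∂((κ (φ l)) x)| := by
          have := abs_sub_le (∫ y, fe (F j) y ∂((κ (φ k)) x))
            (∫ y, fe (F j) y ∂((κ (φ k)) (D i))) (∫ y, fe (F j) y ∂((κ (φ l)) x))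
          have h4 := abs_sub_le (∫ y, fe (F j) y ∂((κ (φ k)) (D i)))
            (∫ y, fe (F j) y ∂((κ (φ l)) (D i))) (∫ y, fe (F j) y ∂((κ (φ l)) x))
          linarith
      _ < ε := by
          have h2' : |(∫ y, fe (F j) y ∂((κ (φ l)) (D i))) - ∫ y, fe (F j) y ∂((κ (φ l)) x)| ≤ ε/4 := by
            rw [abs_sub_comm]; exact h2
          linarith
  -- Cauchy for all continuous f on the cube, at every point
  have hCauchyAll : ∀ (x : X) (f : C(HCube, ℝ)),
      ∃ l : ℝ, Tendsto (fun k => ∫ y, fe f y ∂((κ (φ k)) x)) atTop (𝓝 l) := by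
    intro x f
    apply cauchySeq_tendsto_of_complete
    rw [Metric.cauchySeq_iff]
    intro ε hε
    obtain ⟨j, hj⟩ := Metric.denseRange_iff.1 hF f (ε/4) (by positivity)
    have happrox : ∀ (ρ : Measure Y) [IsProbabilityMeasure ρ],
        |(∫ y, fe f y ∂ρ) - ∫ y, fe (F j) y ∂ρ| ≤ ε/4 := by
      intro ρ hρ
      rw [← integral_sub ((fe f).integrable ρ) ((fe (F j)).integrable ρ)]
      have hb : ∀ y, ‖fe f y - fe (F j) y‖ ≤ ε/4 := by
        intro y
        have h1 : dist (f (e y)) ((F j) (e y)) ≤ dist f (F j) :=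
          ContinuousMap.dist_apply_le_dist (e y)
        rw [hfe_app, hfe_app]
        rw [Real.norm_eq_abs, ← Real.dist_eq]
        exact h1.trans hj.le
      have := norm_integral_le_of_norm_le_const (μ := ρ) (C := ε/4)
        (Eventually.of_forall hb)
      simpa using this
    obtain ⟨N, hN⟩ := Metric.cauchySeq_iff.1 (hCauchyF j x) (ε/4) (by positivity)
    refine ⟨N, fun k hk l hl => ?_⟩
    have h3 := hN k hk l hl
    rw [Real.dist_eq] at h3 ⊢
    have h1 := happrox ((κ (φ k)) x)
    have h2 := happrox ((κ (φ l)) x)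
    have habs := abs_sub_le (∫ y, fe f y ∂((κ (φ k)) x)) (∫ y, fe (F j) y ∂((κ (φ k)) x))
      (∫ y, fe f y ∂((κ (φ l)) x))
    have habs2 := abs_sub_le (∫ y, fe (F j) y ∂((κ (φ k)) x)) (∫ y, fe (F j) y ∂((κ (φ l)) x))
      (∫ y, fe f y ∂((κ (φ l)) x))
    have h2' : |(∫ y, fe (F j) y ∂((κ (φ l)) x)) - ∫ y, fe f y ∂((κ (φ l)) x)| ≤ ε/4 := by
      rw [abs_sub_comm]; exact h2
    linarith
  choose L hL using hCauchyAll
  -- properties of the limit functionals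
  have hLadd : ∀ x (f g : C(HCube, ℝ)), L x (f + g) = L x f + L x g := by
    intro x f g
    have h1 : Tendsto (fun k => ∫ y, fe (f + g) y ∂((κ (φ k)) x)) atTop (𝓝 (L x f + L x g)) := by
      have heq : ∀ k, ∫ y, fe (f + g) y ∂((κ (φ k)) x)
          = (∫ y, fe f y ∂((κ (φ k)) x)) + ∫ y, fe g y ∂((κ (φ k)) x) := by
        intro k
        rw [← integral_add ((fe f).integrable _) ((fe g).integrable _)]
        apply integral_congr_ae
        apply Eventually.of_forall
        intro y
        simp [hfe_app]
      simp_rw [heq]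
      exact (hL x f).add (hL x g)
    exact tendsto_nhds_unique (hL x (f + g)) h1
  have hLmono : ∀ x (f g : C(HCube, ℝ)), (∀ h, f h ≤ g h) → L x f ≤ L x g := by
    intro x f g hfg
    apply le_of_tendsto_of_tendsto' (hL x f) (hL x g)
    intro k
    apply integral_mono ((fe f).integrable _) ((fe g).integrable _)
    intro y
    rw [hfe_app, hfe_app]
    exact hfg (e y)
  have hLone : ∀ x, L x 1 = 1 := by
    intro x
    have h1 : Tendsto (fun k => ∫ y, fe 1 y ∂((κ (φ k)) x)) atTop (𝓝 1) := by
      have heq : ∀ k, ∫ y, fe (1 : C(HCube,ℝ)) y ∂((κ (φ k)) x) = 1 := by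
        intro k
        have : ∀ y : Y, fe (1 : C(HCube,ℝ)) y = 1 := fun y => rfl
        rw [show (fun y => fe (1 : C(HCube,ℝ)) y) = fun _ : Y => (1:ℝ) from funext this]
        simp [integral_const]
      simp_rw [heq]
      exact tendsto_const_nhds
    exact tendsto_nhds_unique (hL x 1) h1
  -- tightness of the limits, a.e.
  set gs : ℕ → X → ENNReal := fun m x => atTop.liminf (fun k => (κ (φ k)) x ((C m)ᶜ)) with hgsdef
  have hgs_meas : ∀ m, Measurable (gs m) := fun m =>
    Measurable.liminf (fun k => (κ (φ k)).measurable_coe (hCmeas m))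
  have hgs_int : ∀ m, ∫⁻ x, gs m x ∂ν ≤ ENNReal.ofReal ((1/8 : ℝ)^m) := by
    intro m
    refine le_trans (lintegral_liminf_le (fun k => (κ (φ k)).measurable_coe (hCmeas m))) ?_
    exact Filter.liminf_le_of_frequently_le (Frequently.of_forall (fun k => hint (φ k) m))
      ⟨0, eventually_map.2 (Eventually.of_forall (fun k => zero_le))⟩
  have haetight : ∀ᵐ x ∂ν, Tendsto (fun m => gs m x) atTop (𝓝 0) := by
    have hsum : ∑' m, ∫⁻ x, gs m x ∂ν ≠ ⊤ := by
      apply ne_top_of_le_ne_top ?_ (ENNReal.tsum_le_tsum hgs_int)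
      have heq : ∀ m : ℕ, ENNReal.ofReal ((1/8 : ℝ)^m) = (ENNReal.ofReal (1/8 : ℝ))^m := by
        intro m
        rw [← ENNReal.ofReal_pow (by norm_num)]
      simp_rw [heq]
      rw [ENNReal.tsum_geometric]
      rw [Ne, ENNReal.inv_eq_top, tsub_eq_zero_iff_le]
      intro hcon
      have : ENNReal.ofReal (1/8 : ℝ) < 1 := ENNReal.ofReal_lt_one.2 (by norm_num)
      exact absurd (hcon.trans_lt this) (lt_irrefl _)
    have hlint : ∫⁻ x, ∑' m, gs m x ∂ν ≠ ⊤ := by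
      rw [lintegral_tsum (fun m => (hgs_meas m).aemeasurable)]
      exact hsum
    have hae := ae_lt_top (Measurable.ennreal_tsum hgs_meas) hlint
    filter_upwards [hae] with x hx
    exact ENNReal.tendsto_atTop_zero_of_tsum_ne_top hx.ne
  refine ⟨φ, hφmono, ?_⟩
  filter_upwards [haetight] with x hx
  -- limit measure on the cube
  obtain ⟨σ, hσprob, hσopen⟩ := exists_measure_of_functional (L x) (hLadd x) (hLmono x) (hLone x)
  set τ : ℕ → Measure HCube := fun k => ((κ (φ k)) x).map e with hτdef
  have hτprob : ∀ k, IsProbabilityMeasure (τ k) :=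
    fun k => Measure.isProbabilityMeasure_map he_me.measurable.aemeasurable
  have h_opensH : ∀ G : Set HCube, IsOpen G → σ G ≤ atTop.liminf (fun k => τ k G) := by
    intro G hGopen
    refine (hσopen G hGopen).trans (iSup₂_le ?_)
    rintro f ⟨hf01, hfG⟩
    have hptbd : ∀ k, ENNReal.ofReal (∫ y, fe f y ∂((κ (φ k)) x)) ≤ τ k G := by
      intro k
      have h1 : ENNReal.ofReal (∫ y, fe f y ∂((κ (φ k)) x)) ≤ (κ (φ k)) x (e ⁻¹' G) := by
        apply integral_le_measure (s := e ⁻¹' G)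
        · intro y _
          rw [hfe_app]
          exact (hf01 (e y)).2
        · intro y hy
          rw [hfe_app, hfG (e y) hy]
      rw [hτdef]
      rw [Measure.map_apply he_me.measurable hGopen.measurableSet]
      exact h1
    have hlim : Tendsto (fun k => ENNReal.ofReal (∫ y, fe f y ∂((κ (φ k)) x))) atTop
        (𝓝 (ENNReal.ofReal (L x f))) := ENNReal.tendsto_ofReal (hL x f)
    rw [← hlim.liminf_eq]
    exact Filter.liminf_le_liminf (Eventually.of_forall hptbd)
  -- σ is concentrated on the union of the embedded compacts
  set S' : Set HCube := ⋃ m, e '' C m with hS'def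
  have hclosed : ∀ m, IsClosed (e '' C m) := fun m => ((hCcomp m).image he_cont).isClosed
  have hσS' : σ S'ᶜ = 0 := by
    have hbound : ∀ m, σ S'ᶜ ≤ gs m x := by
      intro m
      have hopen : IsOpen ((e '' C m)ᶜ) := (hclosed m).isOpen_compl
      have h1 : σ S'ᶜ ≤ σ ((e '' C m)ᶜ) := by
        apply measure_mono
        rw [compl_subset_compl]
        exact subset_iUnion (fun m => e '' C m) m
      refine h1.trans ((h_opensH _ hopen).trans (le_of_eq ?_))
      rw [hgsdef]
      apply Filter.liminf_congr
      apply Eventually.of_forall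
      intro k
      rw [hτdef, Measure.map_apply he_me.measurable hopen.measurableSet,
        Set.preimage_compl, he_inj.preimage_image]
    have h0 : Tendsto (fun _ : ℕ => σ S'ᶜ) atTop (𝓝 (σ S'ᶜ)) := tendsto_const_nhds
    have := le_of_tendsto_of_tendsto' h0 hx hbound
    exact le_antisymm this zero_le
  -- pull back to Y
  set gmap : HCube → Y := Function.extend e id (fun _ => Classical.arbitrary Y) with hgmapdef
  have hgmap_meas : Measurable gmap := he_me.measurable_extend measurable_id measurable_const
  set μx : Measure Y := σ.map gmap with hμxdef
  have hμxprob : IsProbabilityMeasure μx := Measure.isProbabilityMeasure_map hgmap_meas.aemeasurable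
  have h_opensY : ∀ U : Set Y, IsOpen U → μx U ≤ atTop.liminf (fun k => (κ (φ k)) x U) := by
    intro U hU
    obtain ⟨G, hGopen, hGpre⟩ := he_ind.isOpen_iff.1 hU
    have h1 : μx U = σ (gmap ⁻¹' U) := Measure.map_apply hgmap_meas hU.measurableSet
    have h2 : σ (gmap ⁻¹' U) = σ (gmap ⁻¹' U ∩ S') := (measure_inter_conull hσS').symm
    have h3 : gmap ⁻¹' U ∩ S' ⊆ G := by
      rintro h ⟨hhU, hhS⟩
      obtain ⟨m, hm⟩ := Set.mem_iUnion.1 hhS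
      obtain ⟨z, hzC, rfl⟩ := hm
      have hz : gmap (e z) = z := he_inj.extend_apply id (fun _ => Classical.arbitrary Y) z
      rw [Set.mem_preimage, hz] at hhU
      have : z ∈ e ⁻¹' G := by rw [hGpre]; exact hhU
      exact this
    calc μx U = σ (gmap ⁻¹' U ∩ S') := by rw [h1, h2]
      _ ≤ σ G := measure_mono h3
      _ ≤ atTop.liminf (fun k => τ k G) := h_opensH G hGopen
      _ = atTop.liminf (fun k => (κ (φ k)) x U) := by
          apply Filter.liminf_congr
          apply Eventually.of_forall
          intro k
          rw [hτdef, Measure.map_apply he_me.measurable hGopen.measurableSet, hGpre]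
  -- portmanteau conclusion on Y
  set P : ℕ → ProbabilityMeasure Y := fun k => ⟨(κ (φ k)) x, inferInstance⟩ with hPdef
  set Q : ProbabilityMeasure Y := ⟨μx, hμxprob⟩ with hQdef
  have hPQ : Tendsto P atTop (𝓝 Q) := by
    apply MeasureTheory.tendsto_of_forall_isOpen_le_liminf
    intro G hGopen
    have hEnn := h_opensY G hGopen
    have aux : ENNReal.ofNNReal (atTop.liminf (fun k => P k G))
        = atTop.liminf (fun k => (ENNReal.ofNNReal (P k G))) := by
      refine Monotone.map_liminf_of_continuousAt (F := atTop) ENNReal.coe_mono (fun k => P k G)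
        ENNReal.continuous_coe.continuousAt ?_ ?_
      · exact IsBoundedUnder.isCoboundedUnder_ge ⟨1, eventually_map.2 (Eventually.of_forall
          (fun k => ProbabilityMeasure.apply_le_one (P k) G))⟩
      · exact ⟨0, eventually_map.2 (Eventually.of_forall (fun k => zero_le))⟩
    rw [← ENNReal.coe_le_coe, aux]
    simp only [ProbabilityMeasure.ennreal_coeFn_eq_coeFn_toMeasure]
    exact hEnn
  have hfinal := ProbabilityMeasure.tendsto_iff_forall_integral_tendsto.1 hPQ
  exact ⟨μx, hμxprob, fun g => hfinal g⟩

end Main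
end

section
/- Let (W, d_W) be a compact metric space and (Y, d_Y) a proper metric space. Let 𝒦 be a collection of pairs (K, f) where K ⊆ W is a nonempty compact subset and f : K → Y is continuous, satisfying: (i) there exist 0_Y ∈ Y and M < ∞ with sup_{x∈K} d_Y(f(x), 0_Y) ≤ M for all (K, f) ∈ 𝒦, and (ii) for every ε > 0 there is δ > 0 such that d_W(x, y) < δ implies d_Y(f(x), f(y)) < ε for all (K, f) ∈ 𝒦. Then every sequence in 𝒦 has a subsequence converging with respect to the distance d_∞. -/
open Metric Set Filter Topology

/-- The function distance `d_∞` between pairs `(K, f)` of compact subsets of a common metric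
space `W` equipped with `Y`-valued functions: the infimum of `δ > 0` such that every point of
either set admits a `δ`-close point of the other set with `δ`-close function value. -/
noncomputable def dInfty {W Y : Type*} [MetricSpace W] [MetricSpace Y]
    (K₁ K₂ : Set W) (f₁ f₂ : W → Y) : ℝ :=
  sInf { δ : ℝ | 0 < δ ∧
    (∀ x ∈ K₁, ∃ x' ∈ K₂, dist x x' ≤ δ ∧ dist (f₁ x) (f₂ x') ≤ δ) ∧
    (∀ x ∈ K₂, ∃ x' ∈ K₁, dist x x' ≤ δ ∧ dist (f₂ x) (f₁ x') ≤ δ) }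

/-- Arzelà–Ascoli for `d_∞`: a uniformly bounded, uniformly equicontinuous family of
continuous functions on nonempty compact subsets of a compact metric space `W`, with values in
a proper metric space `Y`, is relatively compact with respect to `d_∞`: every sequence has a
subsequence converging in `d_∞` to some continuous function on a nonempty compact subset. -/
theorem stmt14 {W Y : Type*} [MetricSpace W] [CompactSpace W] [MetricSpace Y] [ProperSpace Y]
    (K : ℕ → Set W) (f : ℕ → W → Y)
    (hKne : ∀ n, (K n).Nonempty) (hKc : ∀ n, IsCompact (K n))
    (hfc : ∀ n, ContinuousOn (f n) (K n))
    (y₀ : Y) (M : ℝ) (hbdd : ∀ n, ∀ x ∈ K n, dist (f n x) y₀ ≤ M)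
    (hequi : ∀ ε : ℝ, 0 < ε → ∃ δ : ℝ, 0 < δ ∧ ∀ n, ∀ x ∈ K n, ∀ y ∈ K n,
      dist x y < δ → dist (f n x) (f n y) < ε) :
    ∃ φ : ℕ → ℕ, StrictMono φ ∧ ∃ (K' : Set W) (f' : W → Y),
      (K'.Nonempty ∧ IsCompact K' ∧ ContinuousOn f' K') ∧
      Tendsto (fun k => dInfty (K (φ k)) K' (f (φ k)) f') atTop (𝓝 (0:ℝ)) := by
  classical
  -- the ambient compact set containing all graphs
  set C : Set (W × Y) := univ ×ˢ closedBall y₀ M with hCdef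
  have hCc : IsCompact C := isCompact_univ.prod (isCompact_closedBall y₀ M)
  -- the graphs
  set G : ℕ → Set (W × Y) := fun n => (fun x => (x, f n x)) '' K n with hGdef
  have hGc : ∀ n, IsCompact (G n) := fun n =>
    (hKc n).image_of_continuousOn (continuousOn_id.prodMk (hfc n))
  have hGne : ∀ n, (G n).Nonempty := fun n => (hKne n).image _
  have hGC : ∀ n, G n ⊆ C := by
    rintro n p ⟨x, hx, rfl⟩
    exact ⟨mem_univ _, by simpa using hbdd n x hx⟩
  haveI : CompactSpace C := isCompact_iff_compactSpace.mp hCc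
  -- graphs as nonempty compacts of the compact space C
  have hGc' : ∀ n, IsCompact ((Subtype.val ⁻¹' G n : Set C)) := by
    intro n
    exact (IsClosed.preimage continuous_subtype_val (hGc n).isClosed).isCompact
  have hGne' : ∀ n, ((Subtype.val ⁻¹' G n : Set C)).Nonempty := by
    intro n
    obtain ⟨p, hp⟩ := hGne n
    exact ⟨⟨p, hGC n hp⟩, hp⟩
  set g : ℕ → TopologicalSpace.NonemptyCompacts C := fun n =>
    ⟨⟨Subtype.val ⁻¹' G n, hGc' n⟩, hGne' n⟩ with hgdef
  -- extract a convergent subsequence in the hyperspace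
  obtain ⟨L, -, φ, hφ, hconv⟩ := isCompact_univ.tendsto_subseq (x := g) (fun n => mem_univ _)
  refine ⟨φ, hφ, ?_⟩
  -- the limit set in W × Y
  set Glim : Set (W × Y) := Subtype.val '' (L : Set C) with hGlimdef
  have hGlimc : IsCompact Glim := L.isCompact.image continuous_subtype_val
  have hGlimne : Glim.Nonempty := L.nonempty.image _
  have himg : ∀ n, Subtype.val '' ((g n : Set C)) = G n := by
    intro n
    show Subtype.val '' (Subtype.val ⁻¹' G n) = G n
    rw [Subtype.image_preimage_coe]
    exact inter_eq_self_of_subset_right (hGC n)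
  -- Hausdorff distance of the graphs to the limit tends to 0
  have hHeq : ∀ k, hausdorffDist (G (φ k)) Glim = dist (g (φ k)) L := by
    intro k
    rw [Metric.NonemptyCompacts.dist_eq, ← himg (φ k), hGlimdef]
    exact hausdorffDist_image isometry_subtype_coe
  have hH0 : Tendsto (fun k => hausdorffDist (G (φ k)) Glim) atTop (𝓝 0) := by
    simp only [hHeq]
    exact tendsto_iff_dist_tendsto_zero.mp hconv
  have hfin : ∀ n, EMetric.hausdorffEdist (G n) Glim ≠ ⊤ := fun n =>
    hausdorffEdist_ne_top_of_nonempty_of_bounded (hGne n) hGlimne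
      (hGc n).isBounded hGlimc.isBounded
  -- membership in the graphs
  have hGmem : ∀ n, ∀ q ∈ G n, q.1 ∈ K n ∧ q.2 = f n q.1 := by
    rintro n q ⟨x, hx, rfl⟩; exact ⟨hx, rfl⟩
  -- key estimate: the limit set is a "uniformly continuous graph"
  have hL1 : ∀ ε : ℝ, 0 < ε → ∃ δ : ℝ, 0 < δ ∧ ∀ p ∈ Glim, ∀ q ∈ Glim,
      dist p.1 q.1 < δ → dist p.2 q.2 ≤ ε := by
    intro ε hε
    obtain ⟨δ₀, hδ₀, hδ₀'⟩ := hequi (ε / 2) (by positivity)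
    refine ⟨δ₀ / 2, by positivity, ?_⟩
    intro p hp q hq hpq
    set η := min (δ₀ / 4) (ε / 4) with hηdef
    have hη : 0 < η := by positivity
    obtain ⟨k, hk⟩ := (hH0.eventually (eventually_lt_nhds hη)).exists
    -- approximate p and q by points of `G (φ k)`
    have hd : ∀ r ∈ Glim, infDist r (G (φ k)) < η := by
      intro r hr
      calc infDist r (G (φ k)) ≤ hausdorffDist Glim (G (φ k)) :=
            infDist_le_hausdorffDist_of_mem hr (by rw [EMetric.hausdorffEdist_comm]; exact hfin _)
        _ = hausdorffDist (G (φ k)) Glim := hausdorffDist_comm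
        _ < η := hk
    obtain ⟨a, ha, hpa⟩ := (infDist_lt_iff (hGne (φ k))).mp (hd p hp)
    obtain ⟨b, hb, hqb⟩ := (infDist_lt_iff (hGne (φ k))).mp (hd q hq)
    obtain ⟨ha1, ha2⟩ := hGmem _ a ha
    obtain ⟨hb1, hb2⟩ := hGmem _ b hb
    have hpa1 : dist p.1 a.1 < η := lt_of_le_of_lt (by rw [Prod.dist_eq]; exact le_max_left _ _) hpa
    have hpa2 : dist p.2 a.2 < η := lt_of_le_of_lt (by rw [Prod.dist_eq]; exact le_max_right _ _) hpa
    have hqb1 : dist q.1 b.1 < η := lt_of_le_of_lt (by rw [Prod.dist_eq]; exact le_max_left _ _) hqb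
    have hqb2 : dist q.2 b.2 < η := lt_of_le_of_lt (by rw [Prod.dist_eq]; exact le_max_right _ _) hqb
    have hab : dist a.1 b.1 < δ₀ := by
      have h1 : η ≤ δ₀ / 4 := min_le_left _ _
      calc dist a.1 b.1 ≤ dist a.1 p.1 + dist p.1 q.1 + dist q.1 b.1 := dist_triangle4 _ _ _ _
        _ < η + δ₀ / 2 + η := by
            gcongr
            · rwa [dist_comm]
        _ ≤ δ₀ / 4 + δ₀ / 2 + δ₀ / 4 := by gcongr
        _ = δ₀ := by ring
    have hfab : dist (f (φ k) a.1) (f (φ k) b.1) < ε / 2 := hδ₀' (φ k) a.1 ha1 b.1 hb1 hab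
    have hη2 : η ≤ ε / 4 := min_le_right _ _
    calc dist p.2 q.2 ≤ dist p.2 a.2 + dist a.2 b.2 + dist b.2 q.2 := dist_triangle4 _ _ _ _
      _ ≤ η + ε / 2 + η := by
          have : dist a.2 b.2 < ε / 2 := by rw [ha2, hb2]; exact hfab
          have hbq : dist b.2 q.2 < η := by rw [dist_comm]; exact hqb2
          exact add_le_add (add_le_add hpa2.le this.le) hbq.le
      _ ≤ ε / 4 + ε / 2 + ε / 4 := by gcongr
      _ = ε := by ring
  -- the limit set and function
  set K' : Set W := Prod.fst '' Glim with hK'def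
  set f' : W → Y := fun x => if h : ∃ y, (x, y) ∈ Glim then h.choose else y₀ with hf'def
  have hf'mem : ∀ x ∈ K', (x, f' x) ∈ Glim := by
    rintro x ⟨p, hp, rfl⟩
    have h : ∃ y, (p.1, y) ∈ Glim := ⟨p.2, hp⟩
    simp only [hf'def, dif_pos h]
    exact h.choose_spec
  have huniq : ∀ p ∈ Glim, p.2 = f' p.1 := by
    intro p hp
    have h2 : (p.1, f' p.1) ∈ Glim := hf'mem p.1 ⟨p, hp, rfl⟩
    have : ∀ ε : ℝ, 0 < ε → dist p.2 (f' p.1) ≤ ε := by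
      intro ε hε
      obtain ⟨δ, hδ, hδ'⟩ := hL1 ε hε
      exact hδ' p hp (p.1, f' p.1) h2 (by simpa using hδ)
    have := le_of_forall_pos_le_add (a := dist p.2 (f' p.1)) (b := 0)
      (fun ε hε => by simpa using this ε hε)
    exact dist_le_zero.mp this
  have hK'ne : K'.Nonempty := hGlimne.image _
  have hK'c : IsCompact K' := hGlimc.image continuous_fst
  have hf'c : ContinuousOn f' K' := by
    rw [Metric.continuousOn_iff]
    intro x hx ε hε
    obtain ⟨δ, hδ, hδ'⟩ := hL1 (ε / 2) (by positivity)
    refine ⟨δ, hδ, fun y hy hxy => ?_⟩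
    have := hδ' (y, f' y) (hf'mem y hy) (x, f' x) (hf'mem x hx) (by simpa using hxy)
    simpa using lt_of_le_of_lt this (by linarith)
  refine ⟨K', f', ⟨hK'ne, hK'c, hf'c⟩, ?_⟩
  -- dInfty is controlled by the Hausdorff distance of graphs
  have hle : ∀ k, dInfty (K (φ k)) K' (f (φ k)) f' ≤ hausdorffDist (G (φ k)) Glim := by
    intro k
    set H := hausdorffDist (G (φ k)) Glim with hHdef
    have hHnn : 0 ≤ H := hausdorffDist_nonneg
    have hmem : ∀ δ : ℝ, H < δ → δ ∈ { δ : ℝ | 0 < δ ∧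
        (∀ x ∈ K (φ k), ∃ x' ∈ K', dist x x' ≤ δ ∧ dist (f (φ k) x) (f' x') ≤ δ) ∧
        (∀ x ∈ K', ∃ x' ∈ K (φ k), dist x x' ≤ δ ∧ dist (f' x) (f (φ k) x') ≤ δ) } := by
      intro δ hδ
      have hδ0 : 0 < δ := lt_of_le_of_lt hHnn hδ
      refine ⟨hδ0, ?_, ?_⟩
      · intro x hx
        have hp : (x, f (φ k) x) ∈ G (φ k) := ⟨x, hx, rfl⟩
        have h1 : infDist (x, f (φ k) x) Glim < δ :=
          lt_of_le_of_lt (infDist_le_hausdorffDist_of_mem hp (hfin _)) hδ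
        obtain ⟨q, hq, hdq⟩ := (infDist_lt_iff hGlimne).mp h1
        refine ⟨q.1, ⟨q, hq, rfl⟩, ?_, ?_⟩
        · exact le_trans (by rw [Prod.dist_eq]; exact le_max_left _ _) hdq.le
        · rw [← huniq q hq]
          exact le_trans (by rw [Prod.dist_eq]; exact le_max_right _ _) hdq.le
      · intro x hx
        have hp : (x, f' x) ∈ Glim := hf'mem x hx
        have h1 : infDist (x, f' x) (G (φ k)) < δ := by
          calc infDist (x, f' x) (G (φ k))
              ≤ hausdorffDist Glim (G (φ k)) := infDist_le_hausdorffDist_of_mem hp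
                (by rw [EMetric.hausdorffEdist_comm]; exact hfin _)
            _ = H := hausdorffDist_comm
            _ < δ := hδ
        obtain ⟨q, hq, hdq⟩ := (infDist_lt_iff (hGne (φ k))).mp h1
        obtain ⟨hq1, hq2⟩ := hGmem _ q hq
        refine ⟨q.1, hq1, ?_, ?_⟩
        · exact le_trans (by rw [Prod.dist_eq]; exact le_max_left _ _) hdq.le
        · rw [← hq2]
          exact le_trans (by rw [Prod.dist_eq]; exact le_max_right _ _) hdq.le
    have hbdd' : BddBelow { δ : ℝ | 0 < δ ∧
        (∀ x ∈ K (φ k), ∃ x' ∈ K', dist x x' ≤ δ ∧ dist (f (φ k) x) (f' x') ≤ δ) ∧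
        (∀ x ∈ K', ∃ x' ∈ K (φ k), dist x x' ≤ δ ∧ dist (f' x) (f (φ k) x') ≤ δ) } :=
      ⟨0, fun δ hδ => hδ.1.le⟩
    have : ∀ δ : ℝ, H < δ → dInfty (K (φ k)) K' (f (φ k)) f' ≤ δ := fun δ hδ =>
      csInf_le hbdd' (hmem δ hδ)
    exact le_of_forall_pos_le_add fun ε hε => le_trans (this (H + ε) (by linarith)) le_rfl
  have hnn : ∀ k, 0 ≤ dInfty (K (φ k)) K' (f (φ k)) f' := by
    intro k
    apply Real.sInf_nonneg
    intro δ hδ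
    exact hδ.1.le
  exact squeeze_zero hnn hle hH0
end

section
/- Let (X, d, f) and (X', d', f') be nonempty compact metric spaces each equipped with a continuous Y-valued function defined on a compact subset. Then d_GHf((X, d, f), (X', d', f')) = 0 if and only if there is an isometry ψ between (X, d) and (X', d') such that d_∞(f, f' ∘ ψ) = 0; in particular, when f and f' are continuous and defined on all of X and X' respectively, this holds if and only if f = f' ∘ ψ. -/
open Metric Set Filter Topology

/-- A coupling witnessing the value `r` in the Gromov–Hausdorff-function distance. -/
def IsGHfCoupling {Y : Type*} [MetricSpace Y] {X₁ X₂ W : Type*}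
    (m₁ : MetricSpace X₁) (m₂ : MetricSpace X₂) (mW : MetricSpace W)
    (K₁ : Set X₁) (f₁ : X₁ → Y) (K₂ : Set X₂) (f₂ : X₂ → Y)
    (ψ₁ : X₁ → W) (ψ₂ : X₂ → W) (g₁ g₂ : W → Y) (r : ℝ) : Prop := by
  letI := m₁; letI := m₂; letI := mW
  exact Isometry ψ₁ ∧ Isometry ψ₂ ∧
    (∀ x ∈ K₁, g₁ (ψ₁ x) = f₁ x) ∧ (∀ x ∈ K₂, g₂ (ψ₂ x) = f₂ x) ∧
    r = hausdorffDist (range ψ₁) (range ψ₂) + dInfty (ψ₁ '' K₁) (ψ₂ '' K₂) g₁ g₂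

/-- The Gromov–Hausdorff-function distance. -/
noncomputable def dGHf {Y : Type*} [MetricSpace Y]
    (X₁ : Type) [m₁ : MetricSpace X₁] (K₁ : Set X₁) (f₁ : X₁ → Y)
    (X₂ : Type) [m₂ : MetricSpace X₂] (K₂ : Set X₂) (f₂ : X₂ → Y) : ℝ :=
  sInf { r : ℝ | ∃ (W : Type) (mW : MetricSpace W) (ψ₁ : X₁ → W) (ψ₂ : X₂ → W)
    (g₁ g₂ : W → Y), IsGHfCoupling m₁ m₂ mW K₁ f₁ K₂ f₂ ψ₁ ψ₂ g₁ g₂ r }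

lemma isGHfCoupling_iff {Y : Type*} [MetricSpace Y] {X₁ X₂ W : Type*}
    [m₁ : MetricSpace X₁] [m₂ : MetricSpace X₂] [mW : MetricSpace W]
    (K₁ : Set X₁) (f₁ : X₁ → Y) (K₂ : Set X₂) (f₂ : X₂ → Y)
    (ψ₁ : X₁ → W) (ψ₂ : X₂ → W) (g₁ g₂ : W → Y) (r : ℝ) :
    IsGHfCoupling m₁ m₂ mW K₁ f₁ K₂ f₂ ψ₁ ψ₂ g₁ g₂ r ↔
      (Isometry ψ₁ ∧ Isometry ψ₂ ∧
        (∀ x ∈ K₁, g₁ (ψ₁ x) = f₁ x) ∧ (∀ x ∈ K₂, g₂ (ψ₂ x) = f₂ x) ∧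
        r = hausdorffDist (range ψ₁) (range ψ₂) + dInfty (ψ₁ '' K₁) (ψ₂ '' K₂) g₁ g₂) :=
  Iff.rfl

lemma sInf_zero_helper {S : Set ℝ} (h₁ : ∀ δ ∈ S, 0 ≤ δ) (h₂ : ∀ δ : ℝ, 0 < δ → δ ∈ S) :
    sInf S = 0 := by
  refine le_antisymm ?_ (Real.sInf_nonneg h₁)
  by_contra hlt
  push_neg at hlt
  have h := csInf_le ⟨0, h₁⟩ (h₂ (sInf S / 2) (by linarith))
  linarith

lemma ulim_exists {Z : Type*} [TopologicalSpace Z] [CompactSpace Z]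
    (u : Ultrafilter ℕ) (g : ℕ → Z) : ∃ a, Tendsto g ↑u (𝓝 a) := by
  obtain ⟨a, -, ha⟩ := isCompact_univ.ultrafilter_le_nhds (u.map g)
    (by simp [le_principal_iff])
  refine ⟨a, ?_⟩
  rw [show (Tendsto g ↑u (𝓝 a)) = (map g ↑u ≤ 𝓝 a) from rfl, ← Ultrafilter.coe_map]; exact ha

lemma dGHf_set_nonneg {Y : Type*} [MetricSpace Y]
    {X₁ X₂ : Type} [m₁ : MetricSpace X₁] [m₂ : MetricSpace X₂]
    {K₁ : Set X₁} {f₁ : X₁ → Y} {K₂ : Set X₂} {f₂ : X₂ → Y} :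
    ∀ r ∈ { r : ℝ | ∃ (W : Type) (mW : MetricSpace W) (ψ₁ : X₁ → W) (ψ₂ : X₂ → W)
      (g₁ g₂ : W → Y), IsGHfCoupling m₁ m₂ mW K₁ f₁ K₂ f₂ ψ₁ ψ₂ g₁ g₂ r }, 0 ≤ r := by
  rintro r ⟨W, mW, ψ₁, ψ₂, g₁, g₂, hc⟩
  letI := mW
  rw [isGHfCoupling_iff] at hc
  obtain ⟨-, -, -, -, hr⟩ := hc
  rw [hr]
  exact add_nonneg hausdorffDist_nonneg (Real.sInf_nonneg fun δ hδ => hδ.1.le)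

lemma exists_approx {Y : Type*} [MetricSpace Y]
    {X X' : Type} [MetricSpace X] [CompactSpace X] [Nonempty X]
    [MetricSpace X'] [CompactSpace X'] [Nonempty X']
    {K : Set X} {K' : Set X'} (hK : IsCompact K) (hK' : IsCompact K')
    {f : X → Y} {f' : X' → Y} (hf : ContinuousOn f K) (hf' : ContinuousOn f' K')
    {ε : ℝ} (hε : 0 < ε)
    (h : dGHf X K f X' K' f' = 0) :
    ∃ Φ : X → X',
      (∀ x y : X, |dist (Φ x) (Φ y) - dist x y| ≤ 4 * ε) ∧
      (∀ x' : X', ∃ x : X, dist (Φ x) x' ≤ 4 * ε) ∧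
      (K.Nonempty → K'.Nonempty →
        (∀ x ∈ K, ∃ x' ∈ K', dist (Φ x) x' ≤ 4 * ε ∧ dist (f x) (f' x') ≤ 2 * ε) ∧
        (∀ x' ∈ K', ∃ x ∈ K, dist (Φ x) x' ≤ 4 * ε ∧ dist (f' x') (f x) ≤ 2 * ε)) := by
  classical
  -- the defining set of dGHf
  set S : Set ℝ := { r : ℝ | ∃ (W : Type) (mW : MetricSpace W) (ψ₁ : X → W) (ψ₂ : X' → W)
      (g₁ g₂ : W → Y), IsGHfCoupling ‹MetricSpace X› ‹MetricSpace X'› mW K f K' f' ψ₁ ψ₂ g₁ g₂ r }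
    with hSdef
  have hS : dGHf X K f X' K' f' = sInf S := rfl
  have hpos : ∀ r ∈ S, 0 ≤ r := dGHf_set_nonneg
  -- the set is nonempty: trivial coupling
  have hSne : S.Nonempty := by
    refine ⟨hausdorffDist (range (GromovHausdorff.optimalGHInjl X X'))
        (range (GromovHausdorff.optimalGHInjr X X')) +
        dInfty ((GromovHausdorff.optimalGHInjl X X') '' K)
          ((GromovHausdorff.optimalGHInjr X X') '' K')
          (Function.extend (GromovHausdorff.optimalGHInjl X X') f
            (fun _ => f (Classical.arbitrary X)))
          (Function.extend (GromovHausdorff.optimalGHInjr X X') f'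
            (fun _ => f' (Classical.arbitrary X'))),
      GromovHausdorff.OptimalGHCoupling X X', inferInstance,
      GromovHausdorff.optimalGHInjl X X', GromovHausdorff.optimalGHInjr X X',
      Function.extend (GromovHausdorff.optimalGHInjl X X') f
        (fun _ => f (Classical.arbitrary X)),
      Function.extend (GromovHausdorff.optimalGHInjr X X') f'
        (fun _ => f' (Classical.arbitrary X')), ?_⟩
    rw [isGHfCoupling_iff]
    refine ⟨GromovHausdorff.isometry_optimalGHInjl X X',
      GromovHausdorff.isometry_optimalGHInjr X X', fun x _ => ?_, fun x _ => ?_, rfl⟩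
    · exact (GromovHausdorff.isometry_optimalGHInjl X X').injective.extend_apply _ _ _
    · exact (GromovHausdorff.isometry_optimalGHInjr X X').injective.extend_apply _ _ _
  -- extract a small coupling
  obtain ⟨r, hrS, hrε⟩ : ∃ r ∈ S, r < ε := by
    have := (csInf_lt_iff ⟨0, hpos⟩ hSne).1 (by rw [← hS, h]; exact hε)
    exact this
  obtain ⟨W, mW, ψ₁, ψ₂, g₁, g₂, hc⟩ := hrS
  letI := mW
  rw [isGHfCoupling_iff] at hc
  obtain ⟨iso₁, iso₂, hg₁, hg₂, hr⟩ := hc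
  have hrange₁ : IsCompact (range ψ₁) := isCompact_range iso₁.continuous
  have hrange₂ : IsCompact (range ψ₂) := isCompact_range iso₂.continuous
  have hfin : EMetric.hausdorffEdist (range ψ₁) (range ψ₂) ≠ ⊤ :=
    hausdorffEdist_ne_top_of_nonempty_of_bounded (range_nonempty _) (range_nonempty _)
      hrange₁.isBounded hrange₂.isBounded
  have hdInn : 0 ≤ dInfty (ψ₁ '' K) (ψ₂ '' K') g₁ g₂ :=
    Real.sInf_nonneg fun δ hδ => hδ.1.le
  have hHnn : 0 ≤ hausdorffDist (range ψ₁) (range ψ₂) := hausdorffDist_nonneg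
  have hH : hausdorffDist (range ψ₁) (range ψ₂) < ε := by
    rw [hr] at hrε; linarith
  have hdI : dInfty (ψ₁ '' K) (ψ₂ '' K') g₁ g₂ < ε := by
    rw [hr] at hrε; linarith
  have hΦex : ∀ x : X, ∃ x' : X', dist (ψ₁ x) (ψ₂ x') < ε := by
    intro x
    obtain ⟨w, hw, hd⟩ := exists_dist_lt_of_hausdorffDist_lt (mem_range_self x) hH hfin
    obtain ⟨x', rfl⟩ := hw
    exact ⟨x', hd⟩
  choose Φ hΦ using hΦex
  have e1 : ∀ a b : X, dist (ψ₁ a) (ψ₁ b) = dist a b := fun a b => iso₁.dist_eq a b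
  have e2 : ∀ a b : X', dist (ψ₂ a) (ψ₂ b) = dist a b := fun a b => iso₂.dist_eq a b
  refine ⟨Φ, ?_, ?_, ?_⟩
  · -- almost isometry
    intro x y
    rw [abs_sub_le_iff]
    constructor
    · have t1 : dist (ψ₂ (Φ x)) (ψ₂ (Φ y)) ≤
          dist (ψ₂ (Φ x)) (ψ₁ x) + dist (ψ₁ x) (ψ₁ y) + dist (ψ₁ y) (ψ₂ (Φ y)) :=
        dist_triangle4 _ _ _ _
      have c1 : dist (ψ₂ (Φ x)) (ψ₁ x) = dist (ψ₁ x) (ψ₂ (Φ x)) := dist_comm _ _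
      have := hΦ x; have := hΦ y
      rw [e2, e1, c1] at t1
      linarith
    · have t1 : dist (ψ₁ x) (ψ₁ y) ≤
          dist (ψ₁ x) (ψ₂ (Φ x)) + dist (ψ₂ (Φ x)) (ψ₂ (Φ y)) + dist (ψ₂ (Φ y)) (ψ₁ y) :=
        dist_triangle4 _ _ _ _
      have c1 : dist (ψ₂ (Φ y)) (ψ₁ y) = dist (ψ₁ y) (ψ₂ (Φ y)) := dist_comm _ _
      have := hΦ x; have := hΦ y
      rw [e2, e1, c1] at t1
      linarith
  · -- almost surjective
    intro x'
    obtain ⟨w, hw, hd⟩ := exists_dist_lt_of_hausdorffDist_lt' (mem_range_self x') hH hfin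
    obtain ⟨x, rfl⟩ := hw
    refine ⟨x, ?_⟩
    have t1 : dist (ψ₂ (Φ x)) (ψ₂ x') ≤ dist (ψ₂ (Φ x)) (ψ₁ x) + dist (ψ₁ x) (ψ₂ x') :=
      dist_triangle _ _ _
    have c1 : dist (ψ₂ (Φ x)) (ψ₁ x) = dist (ψ₁ x) (ψ₂ (Φ x)) := dist_comm _ _
    have := hΦ x
    rw [e2, c1] at t1
    linarith
  · -- function conditions
    intro hKne hK'ne
    set T : Set ℝ := { δ : ℝ | 0 < δ ∧
      (∀ w ∈ ψ₁ '' K, ∃ w' ∈ ψ₂ '' K', dist w w' ≤ δ ∧ dist (g₁ w) (g₂ w') ≤ δ) ∧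
      (∀ w ∈ ψ₂ '' K', ∃ w' ∈ ψ₁ '' K, dist w w' ≤ δ ∧ dist (g₂ w) (g₁ w') ≤ δ) } with hTdef
    have hT : dInfty (ψ₁ '' K) (ψ₂ '' K') g₁ g₂ = sInf T := rfl
    -- T is nonempty
    have hTne : T.Nonempty := by
      obtain ⟨CW, hCW⟩ := Metric.isBounded_iff.1 ((hK.image iso₁.continuous).union
        (hK'.image iso₂.continuous)).isBounded
      obtain ⟨CY, hCY⟩ := Metric.isBounded_iff.1
        (((hK.image_of_continuousOn hf).union (hK'.image_of_continuousOn hf')).isBounded)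
      obtain ⟨x₀, hx₀⟩ := id hKne
      obtain ⟨x₀', hx₀'⟩ := id hK'ne
      have hCW0 : (0:ℝ) ≤ CW := le_trans (by simp)
        (hCW (Or.inl (mem_image_of_mem _ hx₀)) (Or.inl (mem_image_of_mem _ hx₀)))
      have hCY0 : (0:ℝ) ≤ CY := le_trans (by simp)
        (hCY (Or.inl (mem_image_of_mem _ hx₀)) (Or.inl (mem_image_of_mem _ hx₀)))
      refine ⟨max CW CY + 1, by positivity, ?_, ?_⟩
      · rintro w ⟨x, hx, rfl⟩
        refine ⟨ψ₂ x₀', mem_image_of_mem _ hx₀', ?_, ?_⟩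
        · exact le_trans (hCW (Or.inl (mem_image_of_mem _ hx))
            (Or.inr (mem_image_of_mem _ hx₀'))) (by linarith [le_max_left CW CY])
        · rw [hg₁ x hx, hg₂ x₀' hx₀']
          exact le_trans (hCY (Or.inl (mem_image_of_mem _ hx))
            (Or.inr (mem_image_of_mem _ hx₀'))) (by linarith [le_max_right CW CY])
      · rintro w ⟨x', hx', rfl⟩
        refine ⟨ψ₁ x₀, mem_image_of_mem _ hx₀, ?_, ?_⟩
        · exact le_trans (hCW (Or.inr (mem_image_of_mem _ hx'))
            (Or.inl (mem_image_of_mem _ hx₀))) (by linarith [le_max_left CW CY])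
        · rw [hg₁ x₀ hx₀, hg₂ x' hx']
          rw [dist_comm]
          exact le_trans (hCY (Or.inl (mem_image_of_mem _ hx₀))
            (Or.inr (mem_image_of_mem _ hx'))) (by linarith [le_max_right CW CY])
    have hTbdd : BddBelow T := ⟨0, fun δ hδ => hδ.1.le⟩
    have hsT : sInf T < 2 * ε := by rw [← hT]; linarith
    obtain ⟨t, htT, ht⟩ := (csInf_lt_iff hTbdd hTne).1 hsT
    -- t < 2*ε ∈ T hence conditions hold with 2*ε
    constructor
    · intro x hx
      obtain ⟨w', ⟨x', hx', rfl⟩, hd1, hd2⟩ := htT.2.1 (ψ₁ x) (mem_image_of_mem _ hx)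
      refine ⟨x', hx', ?_, ?_⟩
      · have t1 : dist (ψ₂ (Φ x)) (ψ₂ x') ≤ dist (ψ₂ (Φ x)) (ψ₁ x) + dist (ψ₁ x) (ψ₂ x') :=
          dist_triangle _ _ _
        have c1 : dist (ψ₂ (Φ x)) (ψ₁ x) = dist (ψ₁ x) (ψ₂ (Φ x)) := dist_comm _ _
        have := hΦ x
        rw [e2, c1] at t1
        linarith
      · rw [hg₁ x hx, hg₂ x' hx'] at hd2
        linarith
    · intro x' hx'
      obtain ⟨w, ⟨x, hx, rfl⟩, hd1, hd2⟩ := htT.2.2 (ψ₂ x') (mem_image_of_mem _ hx')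
      refine ⟨x, hx, ?_, ?_⟩
      · have t1 : dist (ψ₂ (Φ x)) (ψ₂ x') ≤ dist (ψ₂ (Φ x)) (ψ₁ x) + dist (ψ₁ x) (ψ₂ x') :=
          dist_triangle _ _ _
        have c1 : dist (ψ₂ (Φ x)) (ψ₁ x) = dist (ψ₁ x) (ψ₂ (Φ x)) := dist_comm _ _
        have c2 : dist (ψ₁ x) (ψ₂ x') = dist (ψ₂ x') (ψ₁ x) := dist_comm _ _
        have := hΦ x
        rw [e2, c1, c2] at t1
        linarith
      · rw [hg₁ x hx, hg₂ x' hx'] at hd2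
        linarith

lemma ghf_isometry {Y : Type*} [MetricSpace Y]
    {X X' : Type} [MetricSpace X] [CompactSpace X] [Nonempty X]
    [MetricSpace X'] [CompactSpace X'] [Nonempty X']
    {K : Set X} {K' : Set X'} (hK : IsCompact K) (hK' : IsCompact K')
    {f : X → Y} {f' : X' → Y} (hf : ContinuousOn f K) (hf' : ContinuousOn f' K')
    (h : dGHf X K f X' K' f' = 0) :
    ∃ ψ : X → X', Isometry ψ ∧ Function.Surjective ψ ∧
      (K.Nonempty → K'.Nonempty → ψ ⁻¹' K' = K ∧ ∀ x ∈ K, f x = f' (ψ x)) := by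
  classical
  set e : ℕ → ℝ := fun n => 1 / ((n : ℝ) + 1) with he
  have hepos : ∀ n : ℕ, 0 < e n := fun n => by positivity
  choose Φ hA hB hCD using fun n : ℕ => exists_approx hK hK' hf hf' (hepos n) h
  obtain ⟨u, hu⟩ := Ultrafilter.exists_le (atTop : Filter ℕ)
  have helim : Tendsto e ↑u (𝓝 0) :=
    tendsto_one_div_add_atTop_nhds_zero_nat.mono_left hu
  have hclim : ∀ c : ℝ, Tendsto (fun n => c * e n) ↑u (𝓝 0) := fun c => by
    simpa [he, one_div] using helim.const_mul c
  choose ψ hψ using fun x : X => ulim_exists u (fun n => Φ n x)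
  have hiso : Isometry ψ := by
    apply Isometry.of_dist_eq
    intro x y
    have h2 : Tendsto (fun n => dist (Φ n x) (Φ n y)) ↑u (𝓝 (dist x y)) := by
      rw [tendsto_iff_dist_tendsto_zero]
      refine squeeze_zero (fun n => dist_nonneg) (fun n => ?_) (hclim 4)
      rw [Real.dist_eq]
      exact hA n x y
    exact tendsto_nhds_unique ((hψ x).dist (hψ y)) h2
  have hsurj : Function.Surjective ψ := by
    intro x'
    choose xs hxs using fun n => hB n x'
    obtain ⟨x, hx⟩ := ulim_exists u xs
    refine ⟨x, ?_⟩
    have hdd : Tendsto (fun n => dist (Φ n x) x') ↑u (𝓝 (dist (ψ x) x')) :=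
      (hψ x).dist tendsto_const_nhds
    have hbound : ∀ n, dist (Φ n x) x' ≤ dist x (xs n) + 8 * e n := by
      intro n
      have h1 : dist (Φ n x) x' ≤ dist (Φ n x) (Φ n (xs n)) + dist (Φ n (xs n)) x' :=
        dist_triangle _ _ _
      have h3 := abs_le.1 (hA n x (xs n))
      have h2 := hxs n
      linarith [h3.2]
    have hlim0 : Tendsto (fun n => dist x (xs n) + 8 * e n) ↑u (𝓝 0) := by
      have hd0 : Tendsto (fun n => dist x (xs n)) ↑u (𝓝 (dist x x)) :=
        tendsto_const_nhds.dist hx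
      rw [dist_self] at hd0
      simpa using hd0.add (hclim 8)
    have : dist (ψ x) x' ≤ 0 := le_of_tendsto_of_tendsto' hdd hlim0 hbound
    exact dist_le_zero.1 this
  refine ⟨ψ, hiso, hsurj, fun hKne hK'ne => ?_⟩
  have hmem₁ : ∀ x ∈ K, ψ x ∈ K' ∧ f x = f' (ψ x) := by
    intro x hx
    choose xs' hmem hd1 hd2 using fun n => (hCD n hKne hK'ne).1 x hx
    obtain ⟨x', hx'lim⟩ := ulim_exists u xs'
    have hx'K' : x' ∈ K' :=
      hK'.isClosed.mem_of_tendsto hx'lim (Eventually.of_forall hmem)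
    have hψx : ψ x = x' := by
      have hdd : Tendsto (fun n => dist (Φ n x) (xs' n)) ↑u (𝓝 (dist (ψ x) x')) :=
        (hψ x).dist hx'lim
      have hle : dist (ψ x) x' ≤ 0 := le_of_tendsto_of_tendsto' hdd (hclim 4) hd1
      exact dist_le_zero.1 hle
    have hffx : f x = f' x' := by
      have hf'lim : Tendsto (fun n => f' (xs' n)) ↑u (𝓝 (f' x')) :=
        (hf' x' hx'K').tendsto.comp
          (tendsto_nhdsWithin_iff.2 ⟨hx'lim, Eventually.of_forall hmem⟩)
      have hdd : Tendsto (fun n => dist (f x) (f' (xs' n))) ↑u (𝓝 (dist (f x) (f' x'))) :=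
        tendsto_const_nhds.dist hf'lim
      have hle : dist (f x) (f' x') ≤ 0 := le_of_tendsto_of_tendsto' hdd (hclim 2) hd2
      exact dist_le_zero.1 hle
    exact ⟨hψx ▸ hx'K', hψx ▸ hffx⟩
  have hmem₂ : ∀ z : X, ψ z ∈ K' → z ∈ K := by
    intro z hz
    choose xs hmemK hd1 hd2 using fun n => (hCD n hKne hK'ne).2 (ψ z) hz
    obtain ⟨x, hxlim⟩ := ulim_exists u xs
    have hxK : x ∈ K :=
      hK.isClosed.mem_of_tendsto hxlim (Eventually.of_forall hmemK)
    have hψxz : ψ x = ψ z := by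
      have hdd : Tendsto (fun n => dist (Φ n x) (ψ z)) ↑u (𝓝 (dist (ψ x) (ψ z))) :=
        (hψ x).dist tendsto_const_nhds
      have hbound : ∀ n, dist (Φ n x) (ψ z) ≤ dist x (xs n) + 8 * e n := by
        intro n
        have h1 : dist (Φ n x) (ψ z) ≤ dist (Φ n x) (Φ n (xs n)) + dist (Φ n (xs n)) (ψ z) :=
          dist_triangle _ _ _
        have h3 := abs_le.1 (hA n x (xs n))
        have h2 := hd1 n
        linarith [h3.2]
      have hlim0 : Tendsto (fun n => dist x (xs n) + 8 * e n) ↑u (𝓝 0) := by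
        have hd0 : Tendsto (fun n => dist x (xs n)) ↑u (𝓝 (dist x x)) :=
          tendsto_const_nhds.dist hxlim
        rw [dist_self] at hd0
        simpa using hd0.add (hclim 8)
      have hle : dist (ψ x) (ψ z) ≤ 0 := le_of_tendsto_of_tendsto' hdd hlim0 hbound
      exact dist_le_zero.1 hle
    have : x = z := hiso.injective hψxz
    exact this ▸ hxK
  refine ⟨?_, fun x hx => (hmem₁ x hx).2⟩
  ext z
  exact ⟨fun hz => hmem₂ z hz, fun hz => (hmem₁ z hz).1⟩

lemma dInfty_empty_left {W Y : Type*} [MetricSpace W] [MetricSpace Y]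
    {K₂ : Set W} (h : K₂.Nonempty) (f₁ f₂ : W → Y) : dInfty ∅ K₂ f₁ f₂ = 0 := by
  unfold dInfty
  convert Real.sInf_empty using 2
  rw [eq_empty_iff_forall_notMem]
  rintro δ ⟨-, -, hc⟩
  obtain ⟨x, hx⟩ := h
  obtain ⟨x', hx', -⟩ := hc x hx
  exact hx'

lemma dInfty_empty_right {W Y : Type*} [MetricSpace W] [MetricSpace Y]
    {K₁ : Set W} (h : K₁.Nonempty) (f₁ f₂ : W → Y) : dInfty K₁ ∅ f₁ f₂ = 0 := by
  unfold dInfty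
  convert Real.sInf_empty using 2
  rw [eq_empty_iff_forall_notMem]
  rintro δ ⟨-, hc, -⟩
  obtain ⟨x, hx⟩ := h
  obtain ⟨x', hx', -⟩ := hc x hx
  exact hx'

lemma dInfty_empty_empty {W Y : Type*} [MetricSpace W] [MetricSpace Y]
    (f₁ f₂ : W → Y) : dInfty (∅ : Set W) ∅ f₁ f₂ = 0 := by
  refine sInf_zero_helper (fun δ hδ => hδ.1.le) (fun δ hδ => ⟨hδ, by simp, by simp⟩)

lemma dInfty_eq_zero_of_eq {W Y : Type*} [MetricSpace W] [MetricSpace Y]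
    {K : Set W} {f₁ f₂ : W → Y} (h : ∀ x ∈ K, f₁ x = f₂ x) : dInfty K K f₁ f₂ = 0 := by
  refine sInf_zero_helper (fun δ hδ => hδ.1.le) (fun δ hδ => ⟨hδ, ?_, ?_⟩)
  · intro x hx
    exact ⟨x, hx, by simp [hδ.le], by simp [h x hx, hδ.le]⟩
  · intro x hx
    exact ⟨x, hx, by simp [hδ.le], by simp [h x hx, hδ.le]⟩

lemma dGHf_eq_zero_of {Y : Type*} [MetricSpace Y]
    {X X' : Type} [MetricSpace X] [MetricSpace X']
    {K : Set X} {K' : Set X'} {f : X → Y} {f' : X' → Y}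
    (ψ : X → X') (hiso : Isometry ψ) (hsurj : Function.Surjective ψ)
    (hd : dInfty K (ψ ⁻¹' K') f (f' ∘ ψ) = 0) :
    dGHf X K f X' K' f' = 0 := by
  classical
  have hb : Function.Bijective ψ := ⟨hiso.injective, hsurj⟩
  set E := Equiv.ofBijective ψ hb with hE
  set g₁ : X' → Y := fun w => f (E.symm w) with hg₁def
  have hkey : ∀ x : X, g₁ (ψ x) = f x := fun x => congrArg f (E.symm_apply_apply x)
  have hψsym : ∀ w : X', ψ (E.symm w) = w := fun w => E.apply_symm_apply w
  have hdeq : dInfty (ψ '' K) K' g₁ f' = dInfty K (ψ ⁻¹' K') f (f' ∘ ψ) := by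
    unfold dInfty
    congr 1
    ext δ
    simp only [mem_setOf_eq, Function.comp_apply]
    constructor
    · rintro ⟨hδ, hc1, hc2⟩
      refine ⟨hδ, ?_, ?_⟩
      · intro x hx
        obtain ⟨w', hw', hd1, hd2⟩ := hc1 (ψ x) (mem_image_of_mem _ hx)
        refine ⟨E.symm w', by simp [mem_preimage, hψsym w', hw'], ?_, ?_⟩
        · rw [← hiso.dist_eq, hψsym w']; exact hd1
        · rw [hψsym w', ← hkey x]; exact hd2
      · intro z hz
        obtain ⟨w, ⟨x, hx, rfl⟩, hd1, hd2⟩ := hc2 (ψ z) hz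
        refine ⟨x, hx, ?_, ?_⟩
        · rw [← hiso.dist_eq]; exact hd1
        · rw [← hkey x]; exact hd2
    · rintro ⟨hδ, hc1, hc2⟩
      refine ⟨hδ, ?_, ?_⟩
      · rintro w ⟨x, hx, rfl⟩
        obtain ⟨z, hz, hd1, hd2⟩ := hc1 x hx
        refine ⟨ψ z, hz, ?_, ?_⟩
        · rw [hiso.dist_eq]; exact hd1
        · rw [hkey x]; exact hd2
      · intro w' hw'
        obtain ⟨x, hx, hd1, hd2⟩ := hc2 (E.symm w') (by simp [mem_preimage, hψsym w', hw'])
        refine ⟨ψ x, mem_image_of_mem _ hx, ?_, ?_⟩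
        · rw [← hψsym w', hiso.dist_eq]; exact hd1
        · rw [hkey x, ← hψsym w']; exact hd2
  have hmem : (0:ℝ) ∈ { r : ℝ | ∃ (W : Type) (mW : MetricSpace W) (ψ₁ : X → W)
      (ψ₂ : X' → W) (g₁ g₂ : W → Y),
      IsGHfCoupling ‹MetricSpace X› ‹MetricSpace X'› mW K f K' f' ψ₁ ψ₂ g₁ g₂ r } := by
    refine ⟨X', inferInstance, ψ, id, g₁, f', ?_⟩
    rw [isGHfCoupling_iff]
    refine ⟨hiso, isometry_id, fun x _ => hkey x, fun x _ => rfl, ?_⟩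
    rw [hsurj.range_eq, range_id, hausdorffDist_self_zero, image_id, zero_add, hdeq, hd]
  exact le_antisymm (csInf_le ⟨0, dGHf_set_nonneg⟩ hmem) (Real.sInf_nonneg dGHf_set_nonneg)

/-- `d_GHf((X,d,f),(X',d',f')) = 0` if and only if there is a (bijective) isometry
`ψ : X → X'` with `d_∞(f, f' ∘ ψ) = 0`.  In particular, if `f` and `f'` are defined on all of
`X` and `X'`, this holds if and only if `f = f' ∘ ψ`. -/
theorem stmt16 {Y : Type*} [MetricSpace Y] [ProperSpace Y]
    (X X' : Type) [MetricSpace X] [CompactSpace X] [Nonempty X]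
    [MetricSpace X'] [CompactSpace X'] [Nonempty X']
    (K : Set X) (K' : Set X') (hK : IsCompact K) (hK' : IsCompact K')
    (f : X → Y) (f' : X' → Y) (hf : ContinuousOn f K) (hf' : ContinuousOn f' K') :
    (dGHf X K f X' K' f' = 0 ↔
      ∃ ψ : X → X', Isometry ψ ∧ Function.Surjective ψ ∧
        dInfty K (ψ ⁻¹' K') f (f' ∘ ψ) = 0) ∧
    (K = Set.univ → K' = Set.univ →
      (dGHf X K f X' K' f' = 0 ↔
        ∃ ψ : X → X', Isometry ψ ∧ Function.Surjective ψ ∧ f = f' ∘ ψ)) := by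
  constructor
  · constructor
    · intro h
      obtain ⟨ψ, hiso, hsurj, hstrong⟩ := ghf_isometry hK hK' hf hf' h
      refine ⟨ψ, hiso, hsurj, ?_⟩
      rcases K.eq_empty_or_nonempty with hKe | hKne
      · rcases K'.eq_empty_or_nonempty with hK'e | hK'ne
        · rw [hKe, hK'e]
          simpa using dInfty_empty_empty (W := X) f (f' ∘ ψ)
        · rw [hKe]
          apply dInfty_empty_left _ f (f' ∘ ψ)
          obtain ⟨x', hx'⟩ := hK'ne
          obtain ⟨z, rfl⟩ := hsurj x'
          exact ⟨z, hx'⟩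
      · rcases K'.eq_empty_or_nonempty with hK'e | hK'ne
        · rw [hK'e]
          simpa using dInfty_empty_right hKne f (f' ∘ ψ)
        · obtain ⟨hpre, hfeq⟩ := hstrong hKne hK'ne
          rw [hpre]
          exact dInfty_eq_zero_of_eq fun x hx => hfeq x hx
    · rintro ⟨ψ, hiso, hsurj, hd⟩
      exact dGHf_eq_zero_of ψ hiso hsurj hd
  · rintro rfl rfl
    constructor
    · intro h
      obtain ⟨ψ, hiso, hsurj, hstrong⟩ := ghf_isometry hK hK' hf hf' h
      obtain ⟨-, hfeq⟩ := hstrong univ_nonempty univ_nonempty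
      exact ⟨ψ, hiso, hsurj, funext fun x => hfeq x (mem_univ x)⟩
    · rintro ⟨ψ, hiso, hsurj, hfeq⟩
      apply dGHf_eq_zero_of ψ hiso hsurj
      rw [preimage_univ]
      exact dInfty_eq_zero_of_eq fun x _ => congrFun hfeq x
end

section
/- Suppose (X_n, d_n) are nonempty compact metric spaces and f_n, f'_n are bounded real-valued functions on X_n with f_n ≤ f'_n pointwise for each n. If (X_n, d_n, f_n) → (X, d, f) and (X_n, d_n, f'_n) → (X', d', f') in the Gromov–Hausdorff-function topology and f is continuous, then there is an isometry ψ between (X, d) and (X', d') such that f ≤ f' ∘ ψ pointwise. -/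
open Metric Set Filter Topology

private lemma aux_clusterPt_le {u v : ℕ → ℝ} {y L : ℝ}
    (hy : MapClusterPt y atTop u) (h : ∀ n, u n ≤ v n)
    (hv : Tendsto v atTop (𝓝 L)) : y ≤ L := by
  by_contra hc
  push_neg at hc
  have hfreq : ∃ᶠ n in atTop, u n ∈ Ioi ((L + y) / 2) :=
    (mapClusterPt_iff_frequently.1 hy) _ (Ioi_mem_nhds (by linarith))
  have hev : ∀ᶠ n in atTop, v n < (L + y) / 2 :=
    hv.eventually_lt_const (by linarith)
  obtain ⟨n, hn1, hn2⟩ := (hfreq.and_eventually hev).exists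
  simp only [mem_Ioi] at hn1
  linarith [h n]

private lemma aux_clusterPt_ge {u v : ℕ → ℝ} {y L : ℝ}
    (hy : MapClusterPt y atTop u) (h : ∀ n, v n ≤ u n)
    (hv : Tendsto v atTop (𝓝 L)) : L ≤ y := by
  have : -y ≤ -L :=
    aux_clusterPt_le (u := fun n => -(u n)) (v := fun n => -(v n))
      (hy.continuousAt_comp (f := fun t : ℝ => -t) (by fun_prop))
      (fun n => neg_le_neg (h n)) (hv.neg)
  linarith

private lemma aux_isom_self_surj {E : Type*} [MetricSpace E] [CompactSpace E]
    {e : E → E} (he : Isometry e) : Function.Surjective e := by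
  intro z
  by_contra hz
  push_neg at hz
  have : Nonempty E := ⟨z⟩
  have hzr : z ∉ range e := by rintro ⟨x, rfl⟩; exact hz x rfl
  have hclosed : IsClosed (range e) := (isCompact_range he.continuous).isClosed
  have hpos : 0 < infDist z (range e) :=
    (hclosed.notMem_iff_infDist_pos (range_nonempty e)).1 hzr
  set ε := infDist z (range e) with hε
  have hiter : ∀ m : ℕ, Isometry (e^[m]) := by
    intro m
    induction m with
    | zero => simpa using isometry_id
    | succ k ih => rw [Function.iterate_succ]; exact ih.comp he
  have hsep : ∀ m n : ℕ, m < n → ε ≤ dist (e^[m] z) (e^[n] z) := by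
    intro m n hmn
    obtain ⟨k, rfl⟩ : ∃ k, n = m + (k + 1) :=
      ⟨n - m - 1, by omega⟩
    rw [Function.iterate_add_apply, (hiter m).dist_eq]
    have hmem : e^[k+1] z ∈ range e := by
      rw [Function.iterate_succ_apply']; exact mem_range_self _
    exact infDist_le_dist_of_mem hmem
  obtain ⟨x, φ, hφ, hconv⟩ := CompactSpace.tendsto_subseq (fun n => e^[n] z)
  have hcs := hconv.cauchySeq
  rw [Metric.cauchySeq_iff] at hcs
  obtain ⟨N, hN⟩ := hcs ε hpos
  have := hN N le_rfl (N + 1) (by omega)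
  have hlt : φ N < φ (N + 1) := hφ (by omega)
  have := hsep (φ N) (φ (N + 1)) hlt
  simp only [Function.comp] at hN
  have h2 := hN N le_rfl (N + 1) (by omega)
  linarith

private lemma aux_extract {A B : Type} [mA : MetricSpace A] [mB : MetricSpace B]
    [CompactSpace A] [CompactSpace B] [Nonempty A] [Nonempty B]
    (fA : A → ℝ) (fB : B → ℝ) (hfA : Bornology.IsBounded (range fA))
    (hfB : Bornology.IsBounded (range fB)) {ε : ℝ}
    (h : dGHf A univ fA B univ fB < ε) :
    ∃ (α : B → A) (γ : A → B),
      (∀ z z', dist (α z) (α z') ≤ dist z z' + 2*ε ∧ dist z z' ≤ dist (α z) (α z') + 2*ε) ∧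
      (∀ z, |fB z - fA (α z)| ≤ ε) ∧
      (∀ x x', dist (γ x) (γ x') ≤ dist x x' + 2*ε ∧ dist x x' ≤ dist (γ x) (γ x') + 2*ε) ∧
      (∀ x, |fA x - fB (γ x)| ≤ ε) := by
  classical
  have hne : {r : ℝ | ∃ (W : Type) (mW : MetricSpace W) (ψ₁ : A → W) (ψ₂ : B → W)
      (g₁ g₂ : W → ℝ), IsGHfCoupling mA mB mW univ fA univ fB ψ₁ ψ₂ g₁ g₂ r}.Nonempty := by
    letI : MetricSpace (A ⊕ B) := Metric.metricSpaceSum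
    refine ⟨hausdorffDist (range (Sum.inl : A → A ⊕ B)) (range (Sum.inr : B → A ⊕ B)) +
        dInfty ((Sum.inl : A → A ⊕ B) '' univ) ((Sum.inr : B → A ⊕ B) '' univ)
          (Sum.elim fA fB) (Sum.elim fA fB),
      A ⊕ B, ‹_›, Sum.inl, Sum.inr, Sum.elim fA fB, Sum.elim fA fB, ?_⟩
    exact ⟨Metric.isometry_inl, Metric.isometry_inr, fun x _ => rfl, fun x _ => rfl, rfl⟩
  obtain ⟨r, hrS, hrε⟩ := exists_lt_of_csInf_lt hne h
  obtain ⟨W, mW, ψ₁, ψ₂, g₁, g₂, hiso₁, hiso₂, hg₁, hg₂, hr⟩ := hrS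
  rw [hr] at hrε
  have hdle : dInfty (ψ₁ '' univ) (ψ₂ '' univ) g₁ g₂ < ε := by
    have := hausdorffDist_nonneg (s := range ψ₁) (t := range ψ₂)
    linarith
  have hSne : {δ : ℝ | 0 < δ ∧
      (∀ x ∈ ψ₁ '' univ, ∃ x' ∈ ψ₂ '' univ, dist x x' ≤ δ ∧ dist (g₁ x) (g₂ x') ≤ δ) ∧
      (∀ x ∈ ψ₂ '' univ, ∃ x' ∈ ψ₁ '' univ, dist x x' ≤ δ ∧ dist (g₂ x) (g₁ x') ≤ δ)}.Nonempty := by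
    obtain ⟨C, hC⟩ := Metric.isBounded_iff.1
      ((isCompact_range hiso₁.continuous).isBounded.union
        (isCompact_range hiso₂.continuous).isBounded)
    obtain ⟨M, hM⟩ := Metric.isBounded_iff.1 (hfA.union hfB)
    have habsC : 0 ≤ |C| := abs_nonneg C
    have habsM : 0 ≤ |M| := abs_nonneg M
    refine ⟨|C| + |M| + 1, by linarith, ?_, ?_⟩
    · rintro x ⟨a, -, rfl⟩
      refine ⟨ψ₂ (Classical.arbitrary B), ⟨_, mem_univ _, rfl⟩, ?_, ?_⟩
      · have := hC (Or.inl (mem_range_self a)) (Or.inr (mem_range_self (Classical.arbitrary B)))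
        have := le_abs_self C
        linarith
      · rw [hg₁ a (mem_univ a), hg₂ _ (mem_univ _)]
        have := hM (Or.inl (mem_range_self a)) (Or.inr (mem_range_self (Classical.arbitrary B)))
        have := le_abs_self M
        linarith
    · rintro x ⟨b, -, rfl⟩
      refine ⟨ψ₁ (Classical.arbitrary A), ⟨_, mem_univ _, rfl⟩, ?_, ?_⟩
      · have := hC (Or.inr (mem_range_self b)) (Or.inl (mem_range_self (Classical.arbitrary A)))
        have := le_abs_self C
        linarith
      · rw [hg₂ b (mem_univ b), hg₁ _ (mem_univ _)]
        have := hM (Or.inr (mem_range_self b)) (Or.inl (mem_range_self (Classical.arbitrary A)))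
        have := le_abs_self M
        linarith
  unfold dInfty at hdle
  obtain ⟨δ, hδS, hδε⟩ := exists_lt_of_csInf_lt hSne hdle
  obtain ⟨hδpos, hcond₁, hcond₂⟩ := hδS
  have cα : ∀ b : B, ∃ a : A, dist (ψ₂ b) (ψ₁ a) ≤ δ ∧ |fB b - fA a| ≤ δ := by
    intro b
    obtain ⟨x', hx', hd, hfd⟩ := hcond₂ (ψ₂ b) ⟨b, mem_univ b, rfl⟩
    obtain ⟨a, -, rfl⟩ := hx'
    rw [hg₂ b (mem_univ b), hg₁ a (mem_univ a), Real.dist_eq] at hfd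
    exact ⟨a, hd, hfd⟩
  have cγ : ∀ a : A, ∃ b : B, dist (ψ₁ a) (ψ₂ b) ≤ δ ∧ |fA a - fB b| ≤ δ := by
    intro a
    obtain ⟨x', hx', hd, hfd⟩ := hcond₁ (ψ₁ a) ⟨a, mem_univ a, rfl⟩
    obtain ⟨b, -, rfl⟩ := hx'
    rw [hg₁ a (mem_univ a), hg₂ b (mem_univ b), Real.dist_eq] at hfd
    exact ⟨b, hd, hfd⟩
  choose α hαd hαf using cα
  choose γ hγd hγf using cγ
  refine ⟨α, γ, ?_, fun z => (hαf z).trans hδε.le, ?_, fun x => (hγf x).trans hδε.le⟩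
  · intro z z'
    have t1 := dist_triangle4 (ψ₁ (α z)) (ψ₂ z) (ψ₂ z') (ψ₁ (α z'))
    have t2 := dist_triangle4 (ψ₂ z) (ψ₁ (α z)) (ψ₁ (α z')) (ψ₂ z')
    have e1 := hiso₁.dist_eq (α z) (α z')
    have e2 := hiso₂.dist_eq z z'
    have d1 := hαd z
    have d2 := hαd z'
    have c1 : dist (ψ₁ (α z)) (ψ₂ z) = dist (ψ₂ z) (ψ₁ (α z)) := dist_comm _ _
    have c2 : dist (ψ₁ (α z')) (ψ₂ z') = dist (ψ₂ z') (ψ₁ (α z')) := dist_comm _ _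
    constructor <;> linarith
  · intro x x'
    have t1 := dist_triangle4 (ψ₂ (γ x)) (ψ₁ x) (ψ₁ x') (ψ₂ (γ x'))
    have t2 := dist_triangle4 (ψ₁ x) (ψ₂ (γ x)) (ψ₂ (γ x')) (ψ₁ x')
    have e1 := hiso₂.dist_eq (γ x) (γ x')
    have e2 := hiso₁.dist_eq x x'
    have d1 := hγd x
    have d2 := hγd x'
    have c1 : dist (ψ₂ (γ x)) (ψ₁ x) = dist (ψ₁ x) (ψ₂ (γ x)) := dist_comm _ _
    have c2 : dist (ψ₂ (γ x')) (ψ₁ x') = dist (ψ₁ x') (ψ₂ (γ x')) := dist_comm _ _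
    constructor <;> linarith

/-- If `f_n ≤ f'_n` are bounded real-valued functions on the compact metric space `X_n`, and
`(X_n, d_n, f_n) → (X, d, f)`, `(X_n, d_n, f'_n) → (X', d', f')` in the GHf topology with `f`
continuous, then there is a (bijective) isometry `ψ : X → X'` with `f ≤ f' ∘ ψ` pointwise. -/
theorem stmt19
    (X : ℕ → Type) [∀ n, MetricSpace (X n)] [∀ n, CompactSpace (X n)] [∀ n, Nonempty (X n)]
    (f f' : ∀ n, X n → ℝ)
    (hfb : ∀ n, Bornology.IsBounded (Set.range (f n)))
    (hfb' : ∀ n, Bornology.IsBounded (Set.range (f' n)))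
    (hle : ∀ n x, f n x ≤ f' n x)
    (Z : Type) [MetricSpace Z] [CompactSpace Z] [Nonempty Z] (F : Z → ℝ) (hF : Continuous F)
    (Z' : Type) [MetricSpace Z'] [CompactSpace Z'] [Nonempty Z'] (F' : Z' → ℝ)
    (hF'b : Bornology.IsBounded (Set.range F'))
    (h1 : Tendsto (fun n => dGHf (X n) Set.univ (f n) Z Set.univ F) atTop (𝓝 (0:ℝ)))
    (h2 : Tendsto (fun n => dGHf (X n) Set.univ (f' n) Z' Set.univ F') atTop (𝓝 (0:ℝ))) :
    ∃ ψ : Z → Z', Isometry ψ ∧ Function.Surjective ψ ∧ ∀ x, F x ≤ F' (ψ x) := by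
  classical
  obtain ⟨ε1, hε1gt, hε1lim⟩ : ∃ ε : ℕ → ℝ,
      (∀ n, dGHf (X n) Set.univ (f n) Z Set.univ F < ε n) ∧ Tendsto ε atTop (𝓝 0) := by
    refine ⟨fun n => dGHf (X n) Set.univ (f n) Z Set.univ F + 1/((n:ℝ)+1), fun n => ?_, ?_⟩
    · have : (0:ℝ) < 1/((n:ℝ)+1) := by positivity
      linarith
    · simpa using h1.add tendsto_one_div_add_atTop_nhds_zero_nat
  obtain ⟨ε2, hε2gt, hε2lim⟩ : ∃ ε : ℕ → ℝ,
      (∀ n, dGHf (X n) Set.univ (f' n) Z' Set.univ F' < ε n) ∧ Tendsto ε atTop (𝓝 0) := by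
    refine ⟨fun n => dGHf (X n) Set.univ (f' n) Z' Set.univ F' + 1/((n:ℝ)+1), fun n => ?_, ?_⟩
    · have : (0:ℝ) < 1/((n:ℝ)+1) := by positivity
      linarith
    · simpa using h2.add tendsto_one_div_add_atTop_nhds_zero_nat
  have hFb : Bornology.IsBounded (range F) := (isCompact_range hF).isBounded
  have key1 : ∀ n, ∃ (α : Z → X n) (γ : X n → Z),
      (∀ z z', dist (α z) (α z') ≤ dist z z' + 2*(ε1 n) ∧
        dist z z' ≤ dist (α z) (α z') + 2*(ε1 n)) ∧
      (∀ z, |F z - f n (α z)| ≤ ε1 n) ∧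
      (∀ x x', dist (γ x) (γ x') ≤ dist x x' + 2*(ε1 n) ∧
        dist x x' ≤ dist (γ x) (γ x') + 2*(ε1 n)) ∧
      (∀ x, |f n x - F (γ x)| ≤ ε1 n) := by
    intro n
    exact aux_extract (f n) F (hfb n) hFb (hε1gt n)
  have key2 : ∀ n, ∃ (α : Z' → X n) (γ : X n → Z'),
      (∀ z z', dist (α z) (α z') ≤ dist z z' + 2*(ε2 n) ∧
        dist z z' ≤ dist (α z) (α z') + 2*(ε2 n)) ∧
      (∀ z, |F' z - f' n (α z)| ≤ ε2 n) ∧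
      (∀ x x', dist (γ x) (γ x') ≤ dist x x' + 2*(ε2 n) ∧
        dist x x' ≤ dist (γ x) (γ x') + 2*(ε2 n)) ∧
      (∀ x, |f' n x - F' (γ x)| ≤ ε2 n) := by
    intro n
    exact aux_extract (f' n) F' (hfb' n) hF'b (hε2gt n)
  choose α1 γ1 hα1 hα1f hγ1 hγ1f using key1
  choose α2 γ2 hα2 hα2f hγ2 hγ2f using key2
  -- the approximate isometries
  set P : ℕ → (Z' → Z) × (Z → Z') :=
    fun n => (fun a => γ1 n (α2 n a), fun z => γ2 n (α1 n z)) with hP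
  haveI : (Filter.map P atTop).NeBot := map_neBot
  obtain ⟨q, hq⟩ := exists_clusterPt_of_compactSpace (Filter.map P atTop)
  have hq' : MapClusterPt q atTop P := hq
  have hsum : Tendsto (fun n => ε1 n + ε2 n) atTop (𝓝 0) := by
    simpa using hε1lim.add hε2lim
  -- φ = q.1 is an isometry
  have hφiso : Isometry q.1 := by
    refine Isometry.of_dist_eq fun a b => ?_
    have hcont : Continuous (fun p : (Z' → Z) × (Z → Z') => dist (p.1 a) (p.1 b)) :=
      Continuous.dist ((continuous_apply a).comp continuous_fst)
        ((continuous_apply b).comp continuous_fst)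
    have hc : MapClusterPt (dist (q.1 a) (q.1 b)) atTop
        ((fun p : (Z' → Z) × (Z → Z') => dist (p.1 a) (p.1 b)) ∘ P) :=
      hq'.continuousAt_comp hcont.continuousAt
    have hub : ∀ n, ((fun p : (Z' → Z) × (Z → Z') => dist (p.1 a) (p.1 b)) ∘ P) n ≤
        dist a b + (2*(ε2 n) + 2*(ε1 n)) := by
      intro n
      have i1 := (hγ1 n (α2 n a) (α2 n b)).1
      have i2 := (hα2 n a b).1
      simp only [Function.comp, hP]
      linarith
    have hlb : ∀ n, dist a b - (2*(ε2 n) + 2*(ε1 n)) ≤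
        ((fun p : (Z' → Z) × (Z → Z') => dist (p.1 a) (p.1 b)) ∘ P) n := by
      intro n
      have i1 := (hγ1 n (α2 n a) (α2 n b)).2
      have i2 := (hα2 n a b).2
      simp only [Function.comp, hP]
      linarith
    have hvlim : Tendsto (fun n => dist a b + (2*(ε2 n) + 2*(ε1 n))) atTop (𝓝 (dist a b)) := by
      have : Tendsto (fun n => (2:ℝ)*(ε2 n) + 2*(ε1 n)) atTop (𝓝 0) := by
        simpa using ((hε2lim.const_mul 2).add (hε1lim.const_mul 2))
      simpa using (tendsto_const_nhds (x := dist a b) (f := atTop)).add this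
    have hwlim : Tendsto (fun n => dist a b - (2*(ε2 n) + 2*(ε1 n))) atTop (𝓝 (dist a b)) := by
      have : Tendsto (fun n => (2:ℝ)*(ε2 n) + 2*(ε1 n)) atTop (𝓝 0) := by
        simpa using ((hε2lim.const_mul 2).add (hε1lim.const_mul 2))
      simpa using (tendsto_const_nhds (x := dist a b) (f := atTop)).sub this
    exact le_antisymm (aux_clusterPt_le hc hub hvlim) (aux_clusterPt_ge hc hlb hwlim)
  -- χ = q.2 is an isometry
  have hχiso : Isometry q.2 := by
    refine Isometry.of_dist_eq fun a b => ?_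
    have hcont : Continuous (fun p : (Z' → Z) × (Z → Z') => dist (p.2 a) (p.2 b)) :=
      Continuous.dist ((continuous_apply a).comp continuous_snd)
        ((continuous_apply b).comp continuous_snd)
    have hc : MapClusterPt (dist (q.2 a) (q.2 b)) atTop
        ((fun p : (Z' → Z) × (Z → Z') => dist (p.2 a) (p.2 b)) ∘ P) :=
      hq'.continuousAt_comp hcont.continuousAt
    have hub : ∀ n, ((fun p : (Z' → Z) × (Z → Z') => dist (p.2 a) (p.2 b)) ∘ P) n ≤
        dist a b + (2*(ε1 n) + 2*(ε2 n)) := by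
      intro n
      have i1 := (hγ2 n (α1 n a) (α1 n b)).1
      have i2 := (hα1 n a b).1
      simp only [Function.comp, hP]
      linarith
    have hlb : ∀ n, dist a b - (2*(ε1 n) + 2*(ε2 n)) ≤
        ((fun p : (Z' → Z) × (Z → Z') => dist (p.2 a) (p.2 b)) ∘ P) n := by
      intro n
      have i1 := (hγ2 n (α1 n a) (α1 n b)).2
      have i2 := (hα1 n a b).2
      simp only [Function.comp, hP]
      linarith
    have hvlim : Tendsto (fun n => dist a b + (2*(ε1 n) + 2*(ε2 n))) atTop (𝓝 (dist a b)) := by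
      have : Tendsto (fun n => (2:ℝ)*(ε1 n) + 2*(ε2 n)) atTop (𝓝 0) := by
        simpa using ((hε1lim.const_mul 2).add (hε2lim.const_mul 2))
      simpa using (tendsto_const_nhds (x := dist a b) (f := atTop)).add this
    have hwlim : Tendsto (fun n => dist a b - (2*(ε1 n) + 2*(ε2 n))) atTop (𝓝 (dist a b)) := by
      have : Tendsto (fun n => (2:ℝ)*(ε1 n) + 2*(ε2 n)) atTop (𝓝 0) := by
        simpa using ((hε1lim.const_mul 2).add (hε2lim.const_mul 2))
      simpa using (tendsto_const_nhds (x := dist a b) (f := atTop)).sub this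
    exact le_antisymm (aux_clusterPt_le hc hub hvlim) (aux_clusterPt_ge hc hlb hwlim)
  -- the function inequality along φ
  have hFineq : ∀ a : Z', F (q.1 a) ≤ F' a := by
    intro a
    have hcont : Continuous (fun p : (Z' → Z) × (Z → Z') => F (p.1 a)) :=
      hF.comp ((continuous_apply a).comp continuous_fst)
    have hc : MapClusterPt (F (q.1 a)) atTop
        ((fun p : (Z' → Z) × (Z → Z') => F (p.1 a)) ∘ P) :=
      hq'.continuousAt_comp (f := fun p : (Z' → Z) × (Z → Z') => F (p.1 a))
        hcont.continuousAt
    have hub : ∀ n, ((fun p : (Z' → Z) × (Z → Z') => F (p.1 a)) ∘ P) n ≤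
        F' a + (ε1 n + ε2 n) := by
      intro n
      have i1 := abs_le.1 (hγ1f n (α2 n a))
      have i2 := abs_le.1 (hα2f n a)
      have i3 := hle n (α2 n a)
      simp only [Function.comp, hP]
      linarith [i1.1, i1.2, i2.1, i2.2]
    have hvlim : Tendsto (fun n => F' a + (ε1 n + ε2 n)) atTop (𝓝 (F' a)) := by
      simpa using (tendsto_const_nhds (x := F' a) (f := atTop)).add hsum
    exact aux_clusterPt_le hc hub hvlim
  -- surjectivity of φ via the isometric self-map trick
  have hφsurj : Function.Surjective q.1 :=
    Function.Surjective.of_comp (aux_isom_self_surj (hφiso.comp hχiso))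
  have hbij : Function.Bijective q.1 := ⟨hφiso.injective, hφsurj⟩
  let e := Equiv.ofBijective q.1 hbij
  refine ⟨e.symm, Isometry.of_dist_eq fun x y => ?_, e.symm.surjective, fun x => ?_⟩
  · have hx : q.1 (e.symm x) = x := e.apply_symm_apply x
    have hy : q.1 (e.symm y) = y := e.apply_symm_apply y
    calc dist (e.symm x) (e.symm y) = dist (q.1 (e.symm x)) (q.1 (e.symm y)) :=
        (hφiso.dist_eq _ _).symm
      _ = dist x y := by rw [hx, hy]
  · have hx : q.1 (e.symm x) = x := e.apply_symm_apply x
    calc F x = F (q.1 (e.symm x)) := by rw [hx]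
      _ ≤ F' (e.symm x) := hFineq _
end
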